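/- arXiv:1909.02968 — 11 statements merged into one kernel-verified Lean document; each statement's English description precedes it below -/
import Mathlib

section
/- Let I be a non-empty interval of ℝ, let f : I → ℝ be a continuous and strictly monotone function such that f(I) is closed, and let p : I → (0,∞) be a measurable function. Let (ξ_n) be a sequence of independent identically distributed random variables such that P(ξ_1 ∈ I) = 1, E((p(ξ_1))²) < ∞ and E((p(ξ_1) f(ξ_1))²) < ∞. Then the Bajraktarević means satisfy the strong law of large numbers: B^{f,p}_n(ξ_1,…,ξ_n) → f⁻¹( E(p(ξ_1) f(ξ_1)) / E(p(ξ_1)) ) almost surely as n → ∞. -/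
open MeasureTheory ProbabilityTheory Filter Topology

/-- An L² function on a probability space is integrable. -/
lemma integrable_of_sq' {Ω : Type*} [MeasurableSpace Ω] (μ : Measure Ω) [IsProbabilityMeasure μ]
    {g : Ω → ℝ} (hg : AEStronglyMeasurable g μ)
    (h2 : Integrable (fun ω => g ω ^ 2) μ) : Integrable g μ := by
  refine ((integrable_const (1 : ℝ)).add h2).mono' hg (Filter.Eventually.of_forall fun ω => ?_)
  have h := sq_abs (g ω)
  have h2 := sq_nonneg (|g ω| - 1)
  simp only [Real.norm_eq_abs, Pi.add_apply]
  nlinarith [abs_nonneg (g ω)]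

/-- The integral of an a.e. positive integrable function on a probability space is positive. -/
lemma integral_pos_of_ae_pos' {Ω : Type*} [MeasurableSpace Ω] (μ : Measure Ω)
    [IsProbabilityMeasure μ] {W : Ω → ℝ} (hW : Integrable W μ)
    (hpos : ∀ᵐ ω ∂μ, 0 < W ω) : 0 < ∫ ω, W ω ∂μ := by
  have hle : 0 ≤ᵐ[μ] W := hpos.mono fun ω h => h.le
  have h0 : 0 ≤ ∫ ω, W ω ∂μ := integral_nonneg_of_ae hle
  rcases h0.lt_or_eq with h | h
  · exact h
  · exfalso
    have hz : W =ᵐ[μ] 0 := (integral_eq_zero_iff_of_nonneg_ae hle hW).1 h.symm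
    obtain ⟨ω, h1, h2⟩ := (hpos.and hz).exists
    simp only [Pi.zero_apply] at h2
    linarith

/-- A weighted average (w.r.t. positive weights) of integrable random variables taking values
in an order-connected set lies in that set. -/
lemma avg_mem' {Ω : Type*} [MeasurableSpace Ω] (μ : Measure Ω) [IsProbabilityMeasure μ]
    {S : Set ℝ} (hS : S.OrdConnected) {W Z : Ω → ℝ}
    (hW : Integrable W μ) (hWZ : Integrable (fun ω => W ω * Z ω) μ)
    (hWpos : ∀ᵐ ω ∂μ, 0 < W ω) (hZ : ∀ᵐ ω ∂μ, Z ω ∈ S) :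
    (∫ ω, W ω * Z ω ∂μ) / (∫ ω, W ω ∂μ) ∈ S := by
  set A := ∫ ω, W ω ∂μ with hA'
  set B := ∫ ω, W ω * Z ω ∂μ with hB'
  have hA : 0 < A := integral_pos_of_ae_pos' μ hW hWpos
  by_contra hc
  have hcases : (∀ s ∈ S, B / A < s) ∨ (∀ s ∈ S, s < B / A) := by
    by_contra h'
    push_neg at h'
    obtain ⟨⟨s1, hs1, hs1le⟩, ⟨s2, hs2, hs2le⟩⟩ := h'
    exact hc (hS.out hs1 hs2 ⟨hs1le, hs2le⟩)
  have hBA : (B / A) * A = B := div_mul_cancel₀ B hA.ne'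
  rcases hcases with h | h
  · -- everything in S is above B/A, so W*(Z - B/A) > 0 a.e., but its integral is 0
    set c := B / A
    have hpos : ∀ᵐ ω ∂μ, 0 < W ω * Z ω - c * W ω := by
      filter_upwards [hWpos, hZ] with ω h1 h2
      have := h _ h2
      nlinarith
    have hint : Integrable (fun ω => W ω * Z ω - c * W ω) μ := hWZ.sub (hW.const_mul c)
    have hzero : ∫ ω, (W ω * Z ω - c * W ω) ∂μ = 0 := by
      rw [integral_sub hWZ (hW.const_mul c), integral_const_mul]
      simp only [← hA', ← hB']
      rw [hBA]; ring
    have hz : (fun ω => W ω * Z ω - c * W ω) =ᵐ[μ] 0 :=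
      (integral_eq_zero_iff_of_nonneg_ae (hpos.mono fun ω h => h.le) hint).1 hzero
    obtain ⟨ω, h1, h2⟩ := (hpos.and hz).exists
    simp only [Pi.zero_apply] at h2
    linarith
  · set c := B / A
    have hpos : ∀ᵐ ω ∂μ, 0 < c * W ω - W ω * Z ω := by
      filter_upwards [hWpos, hZ] with ω h1 h2
      have := h _ h2
      nlinarith
    have hint : Integrable (fun ω => c * W ω - W ω * Z ω) μ := (hW.const_mul c).sub hWZ
    have hzero : ∫ ω, (c * W ω - W ω * Z ω) ∂μ = 0 := by
      rw [integral_sub (hW.const_mul c) hWZ, integral_const_mul]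
      simp only [← hA', ← hB']
      rw [hBA]; ring
    have hz : (fun ω => c * W ω - W ω * Z ω) =ᵐ[μ] 0 :=
      (integral_eq_zero_iff_of_nonneg_ae (hpos.mono fun ω h => h.le) hint).1 hzero
    obtain ⟨ω, h1, h2⟩ := (hpos.and hz).exists
    simp only [Pi.zero_apply] at h2
    linarith

/-- A finite weighted average of points of an order-connected set lies in the set. -/
lemma weighted_avg_mem' {S : Set ℝ} (hS : S.OrdConnected) {n : ℕ} (hn : 0 < n)
    {w z : ℕ → ℝ} (hw : ∀ i < n, 0 < w i) (hz : ∀ i < n, z i ∈ S) :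
    (∑ i ∈ Finset.range n, w i * z i) / (∑ i ∈ Finset.range n, w i) ∈ S := by
  have hne : (Finset.range n).Nonempty := Finset.nonempty_range_iff.2 hn.ne'
  obtain ⟨j, hj, hjmin⟩ := Finset.exists_min_image (Finset.range n) z hne
  obtain ⟨k, hk, hkmax⟩ := Finset.exists_max_image (Finset.range n) z hne
  have hWpos : 0 < ∑ i ∈ Finset.range n, w i :=
    Finset.sum_pos (fun i hi => hw i (Finset.mem_range.1 hi)) hne
  have h1 : z j * (∑ i ∈ Finset.range n, w i) ≤ ∑ i ∈ Finset.range n, w i * z i := by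
    rw [Finset.mul_sum]
    refine Finset.sum_le_sum fun i hi => ?_
    rw [mul_comm (z j) (w i)]
    exact mul_le_mul_of_nonneg_left (hjmin i hi) (hw i (Finset.mem_range.1 hi)).le
  have h2 : ∑ i ∈ Finset.range n, w i * z i ≤ z k * (∑ i ∈ Finset.range n, w i) := by
    rw [Finset.mul_sum]
    refine Finset.sum_le_sum fun i hi => ?_
    rw [mul_comm (z k) (w i)]
    exact mul_le_mul_of_nonneg_left (hkmax i hi) (hw i (Finset.mem_range.1 hi)).le
  exact hS.out (hz j (Finset.mem_range.1 hj)) (hz k (Finset.mem_range.1 hk))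
    ⟨(le_div_iff₀ hWpos).2 h1, (div_le_iff₀ hWpos).2 h2⟩

/-- Continuity (along a sequence) of the inverse of a strictly monotone function on an
order-connected set. -/
lemma invFunOn_tendsto_mono' {I : Set ℝ} (hIconn : I.OrdConnected) {f : ℝ → ℝ}
    (hfm : StrictMonoOn f I) {R : ℕ → ℝ} {x0 : ℝ} (hx0 : x0 ∈ I)
    (hR : ∀ᶠ n in atTop, R n ∈ f '' I) (hlim : Tendsto R atTop (𝓝 (f x0))) :
    Tendsto (fun n => Function.invFunOn f I (R n)) atTop (𝓝 x0) := by
  refine tendsto_order.2 ⟨fun a ha => ?_, fun b hb => ?_⟩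
  · by_cases h : ∃ x ∈ I, x ≤ a
    · obtain ⟨x', hx'I, hx'a⟩ := h
      have haI : a ∈ I := hIconn.out hx'I hx0 ⟨hx'a, ha.le⟩
      have hfa : f a < f x0 := hfm haI hx0 ha
      filter_upwards [hR, hlim.eventually (eventually_gt_nhds hfa)] with n hn hn'
      obtain ⟨x, hxI, hfx⟩ := hn
      have hex : ∃ y ∈ I, f y = R n := ⟨x, hxI, hfx⟩
      have hmem : Function.invFunOn f I (R n) ∈ I := Function.invFunOn_mem hex
      have heq : f (Function.invFunOn f I (R n)) = R n := Function.invFunOn_eq hex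
      by_contra hle
      push_neg at hle
      have := hfm.monotoneOn hmem haI hle
      rw [heq] at this
      linarith
    · push_neg at h
      filter_upwards [hR] with n hn
      obtain ⟨x, hxI, hfx⟩ := hn
      exact h _ (Function.invFunOn_mem ⟨x, hxI, hfx⟩)
  · by_cases h : ∃ x ∈ I, b ≤ x
    · obtain ⟨x', hx'I, hx'b⟩ := h
      have hbI : b ∈ I := hIconn.out hx0 hx'I ⟨hb.le, hx'b⟩
      have hfb : f x0 < f b := hfm hx0 hbI hb
      filter_upwards [hR, hlim.eventually (eventually_lt_nhds hfb)] with n hn hn'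
      obtain ⟨x, hxI, hfx⟩ := hn
      have hex : ∃ y ∈ I, f y = R n := ⟨x, hxI, hfx⟩
      have hmem : Function.invFunOn f I (R n) ∈ I := Function.invFunOn_mem hex
      have heq : f (Function.invFunOn f I (R n)) = R n := Function.invFunOn_eq hex
      by_contra hle
      push_neg at hle
      have := hfm.monotoneOn hbI hmem hle
      rw [heq] at this
      linarith
    · push_neg at h
      filter_upwards [hR] with n hn
      obtain ⟨x, hxI, hfx⟩ := hn
      exact h _ (Function.invFunOn_mem ⟨x, hxI, hfx⟩)

/-- For injective `f`, `invFunOn` of `f` agrees with `invFunOn` of `-f` on the image. -/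
lemma invFunOn_neg_eq' {I : Set ℝ} {f : ℝ → ℝ} (hinj : Set.InjOn f I) {y : ℝ}
    (hy : y ∈ f '' I) :
    Function.invFunOn (fun x => -f x) I (-y) = Function.invFunOn f I y := by
  obtain ⟨x, hxI, hfx⟩ := hy
  have h1 : ∃ a ∈ I, f a = y := ⟨x, hxI, hfx⟩
  have h2 : ∃ a ∈ I, (fun x => -f x) a = -y := ⟨x, hxI, by simp [hfx]⟩
  refine hinj (Function.invFunOn_mem h2) (Function.invFunOn_mem h1) ?_
  have e2 := Function.invFunOn_eq h2
  have e1 := Function.invFunOn_eq h1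
  rw [e1]
  linarith

/-- Strong law of large numbers for Bajraktarević means of i.i.d. random variables. -/
theorem bajraktarevic_slln
    {Ω : Type*} [MeasurableSpace Ω] (μ : Measure Ω) [IsProbabilityMeasure μ]
    (I : Set ℝ) (hI : I.Nonempty) (hIconn : I.OrdConnected)
    (f p : ℝ → ℝ)
    (hfc : ContinuousOn f I) (hfm : StrictMonoOn f I ∨ StrictAntiOn f I)
    (hclosed : IsClosed (f '' I))
    (hpmeas : Measurable p) (hppos : ∀ x ∈ I, 0 < p x)
    (ξ : ℕ → Ω → ℝ) (hmeas : ∀ n, Measurable (ξ n))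
    (hindep : iIndepFun ξ μ)
    (hident : ∀ n, IdentDistrib (ξ n) (ξ 0) μ μ)
    (hmem : ∀ᵐ ω ∂μ, ξ 0 ω ∈ I)
    (hp2 : Integrable (fun ω => (p (ξ 0 ω)) ^ 2) μ)
    (hpf2 : Integrable (fun ω => (p (ξ 0 ω) * f (ξ 0 ω)) ^ 2) μ) :
    ∀ᵐ ω ∂μ, Tendsto
      (fun n => Function.invFunOn f I
        ((∑ i ∈ Finset.range n, p (ξ i ω) * f (ξ i ω)) /
          (∑ i ∈ Finset.range n, p (ξ i ω))))
      atTop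
      (𝓝 (Function.invFunOn f I
        ((∫ ω, p (ξ 0 ω) * f (ξ 0 ω) ∂μ) / (∫ ω, p (ξ 0 ω) ∂μ)))) := by
  classical
  have hImeas : MeasurableSet I := hIconn.measurableSet
  -- a measurable function agreeing with `f` on `I`
  set F : ℝ → ℝ := Function.extend (Subtype.val : I → ℝ) (fun x => f x.1) (fun _ => 0) with hFdef
  have hFmeas : Measurable F :=
    (MeasurableEmbedding.subtype_coe hImeas).measurable_extend
      hfc.restrict.measurable measurable_const
  have hFeq : ∀ x ∈ I, F x = f x := by
    intro x hx
    have : F ((⟨x, hx⟩ : I) : ℝ) = f ((⟨x, hx⟩ : I) : ℝ) :=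
      Subtype.val_injective.extend_apply _ _ ⟨x, hx⟩
    simpa using this
  have hinj : Set.InjOn f I := by
    rcases hfm with h | h
    · exact h.injOn
    · exact h.injOn
  -- all variables are a.s. in `I`
  have hmemAll : ∀ᵐ ω ∂μ, ∀ i, ξ i ω ∈ I := by
    rw [ae_all_iff]
    intro i
    have h := (hident i).measure_mem_eq hImeas.compl
    rw [ae_iff] at hmem ⊢
    have e1 : {ω | ¬ξ i ω ∈ I} = ξ i ⁻¹' Iᶜ := rfl
    have e2 : {ω | ¬ξ 0 ω ∈ I} = ξ 0 ⁻¹' Iᶜ := rfl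
    rw [e1, h, ← e2]
    exact hmem
  -- the two sequences of random variables
  set X : ℕ → Ω → ℝ := fun i ω => p (ξ i ω) with hXdef
  set Y : ℕ → Ω → ℝ := fun i ω => p (ξ i ω) * F (ξ i ω) with hYdef
  have hXm : ∀ i, Measurable (X i) := fun i => hpmeas.comp (hmeas i)
  have hYm : ∀ i, Measurable (Y i) := fun i => (hpmeas.mul hFmeas).comp (hmeas i)
  have hX0int : Integrable (X 0) μ := integrable_of_sq' μ (hXm 0).aestronglyMeasurable hp2
  have hYsq : Integrable (fun ω => Y 0 ω ^ 2) μ := by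
    refine hpf2.congr ?_
    filter_upwards [hmem] with ω h
    simp only [hYdef, hFeq _ h]
  have hY0int : Integrable (Y 0) μ := integrable_of_sq' μ (hYm 0).aestronglyMeasurable hYsq
  have hXind : Pairwise (Function.onFun (IndepFun · · μ) X) :=
    fun i j hij => (hindep.indepFun hij).comp hpmeas hpmeas
  have hYind : Pairwise (Function.onFun (IndepFun · · μ) Y) :=
    fun i j hij => (hindep.indepFun hij).comp (hpmeas.mul hFmeas) (hpmeas.mul hFmeas)
  have hXid : ∀ i, IdentDistrib (X i) (X 0) μ μ := fun i => (hident i).comp hpmeas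
  have hYid : ∀ i, IdentDistrib (Y i) (Y 0) μ μ :=
    fun i => (hident i).comp (hpmeas.mul hFmeas)
  have hlawX := strong_law_ae_real X hX0int hXind hXid
  have hlawY := strong_law_ae_real Y hY0int hYind hYid
  -- the limiting constants
  set A := ∫ ω, p (ξ 0 ω) ∂μ with hAdef
  set B := ∫ ω, p (ξ 0 ω) * f (ξ 0 ω) ∂μ with hBdef
  have hAX : μ[X 0] = A := rfl
  have hBY : μ[Y 0] = B := by
    refine integral_congr_ae ?_
    filter_upwards [hmem] with ω h
    simp only [hYdef, hFeq _ h]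
  rw [hBY] at hlawY
  have hXpos : ∀ᵐ ω ∂μ, 0 < X 0 ω := hmem.mono fun ω h => hppos _ h
  have hA : 0 < A := integral_pos_of_ae_pos' μ hX0int hXpos
  -- the image is order-connected
  have hSconn : (f '' I).OrdConnected :=
    (hIconn.isPreconnected.image f hfc).ordConnected
  -- the limit point lies in the image
  have hcS : B / A ∈ f '' I := by
    have hZ : ∀ᵐ ω ∂μ, F (ξ 0 ω) ∈ f '' I := by
      filter_upwards [hmem] with ω h
      rw [hFeq _ h]
      exact ⟨ξ 0 ω, h, rfl⟩
    have h := avg_mem' μ hSconn hX0int (by exact hY0int) hXpos hZ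
    rw [show (∫ ω, X 0 ω * F (ξ 0 ω) ∂μ) = ∫ ω, Y 0 ω ∂μ from rfl, hBY] at h
    exact h
  obtain ⟨x', hx'I, hfx'⟩ := hcS
  have hex : ∃ a ∈ I, f a = B / A := ⟨x', hx'I, hfx'⟩
  set x0 := Function.invFunOn f I (B / A) with hx0def
  have hx0I : x0 ∈ I := Function.invFunOn_mem hex
  have hfx0 : f x0 = B / A := Function.invFunOn_eq hex
  -- main argument
  filter_upwards [hmemAll, hlawX, hlawY] with ω hωI hωX hωY
  set R : ℕ → ℝ := fun n =>
    (∑ i ∈ Finset.range n, p (ξ i ω) * f (ξ i ω)) / (∑ i ∈ Finset.range n, p (ξ i ω)) with hRdef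
  have hsum : ∀ n, (∑ i ∈ Finset.range n, Y i ω) = ∑ i ∈ Finset.range n, p (ξ i ω) * f (ξ i ω) :=
    fun n => Finset.sum_congr rfl fun i _ => by simp only [hYdef, hFeq _ (hωI i)]
  have hnum : Tendsto (fun n : ℕ => (∑ i ∈ Finset.range n, p (ξ i ω) * f (ξ i ω)) / n)
      atTop (𝓝 B) := hωY.congr fun n => by rw [hsum]
  have hratio : Tendsto (fun n : ℕ =>
      ((∑ i ∈ Finset.range n, p (ξ i ω) * f (ξ i ω)) / n) /
        ((∑ i ∈ Finset.range n, p (ξ i ω)) / n)) atTop (𝓝 (B / A)) :=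
    hnum.div hωX hA.ne'
  have heq : ∀ᶠ n in atTop, ((∑ i ∈ Finset.range n, p (ξ i ω) * f (ξ i ω)) / n) /
      ((∑ i ∈ Finset.range n, p (ξ i ω)) / n) = R n := by
    filter_upwards [eventually_ge_atTop 1] with n hn
    have hn0 : (n : ℝ) ≠ 0 := Nat.cast_ne_zero.2 (by omega)
    rw [div_div_div_comm, div_self hn0, div_one]
  have hRlim : Tendsto R atTop (𝓝 (B / A)) := Tendsto.congr' heq hratio
  have hRS : ∀ᶠ n in atTop, R n ∈ f '' I := by
    filter_upwards [eventually_ge_atTop 1] with n hn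
    exact weighted_avg_mem' hSconn (by omega)
      (fun i _ => hppos _ (hωI i)) (fun i _ => ⟨ξ i ω, hωI i, rfl⟩)
  rcases hfm with hmono | hanti
  · exact invFunOn_tendsto_mono' hIconn hmono hx0I hRS (by rw [hfx0]; exact hRlim)
  · have hmono' : StrictMonoOn (fun x => -f x) I :=
      fun x hx y hy hxy => neg_lt_neg (hanti hx hy hxy)
    have hRS' : ∀ᶠ n in atTop, -R n ∈ (fun x => -f x) '' I := by
      filter_upwards [hRS] with n hn
      obtain ⟨x, hxI, hfx⟩ := hn
      exact ⟨x, hxI, by simp [hfx]⟩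
    have hRlim' : Tendsto (fun n => -R n) atTop (𝓝 ((fun x => -f x) x0)) := by
      simpa [hfx0] using hRlim.neg
    have h := invFunOn_tendsto_mono' hIconn hmono' hx0I hRS' hRlim'
    refine Tendsto.congr' ?_ h
    filter_upwards [hRS] with n hn
    exact invFunOn_neg_eq' hinj hn
end

section
/- Let (ξ_n) be a sequence of independent identically distributed random variables such that P(ξ_1 > 0) = 1, E(ξ_1) < ∞ and Var(ln ξ_1) ∈ (0,∞). Then the exponential Cauchy quotient means satisfy 𝓑_n(ξ_1,…,ξ_n) → e^{E(ln ξ_1)} almost surely as n → ∞. -/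
open MeasureTheory ProbabilityTheory Filter Topology

/-- Strong law of large numbers for exponential Cauchy quotient (Beta-type) means
of i.i.d. random variables. -/
theorem expCauchyQuotient_slln
    {Ω : Type*} [MeasurableSpace Ω] (μ : Measure Ω) [IsProbabilityMeasure μ]
    (ξ : ℕ → Ω → ℝ) (hmeas : ∀ n, Measurable (ξ n))
    (hindep : iIndepFun ξ μ)
    (hident : ∀ n, IdentDistrib (ξ n) (ξ 0) μ μ)
    (hpos : ∀ᵐ ω ∂μ, 0 < ξ 0 ω)
    (hint : Integrable (ξ 0) μ)
    (hL2 : MemLp (fun ω => Real.log (ξ 0 ω)) 2 μ)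
    (hvarpos : 0 < variance (fun ω => Real.log (ξ 0 ω)) μ) :
    ∀ᵐ ω ∂μ, Tendsto
      (fun n : ℕ =>
        (((n : ℝ) * ∏ i ∈ Finset.range n, ξ i ω) / (∑ i ∈ Finset.range n, ξ i ω))
          ^ (((n : ℝ) - 1)⁻¹))
      atTop
      (𝓝 (Real.exp (∫ ω, Real.log (ξ 0 ω) ∂μ))) := by
  set m : ℝ := ∫ ω, Real.log (ξ 0 ω) ∂μ with hm
  set A : ℝ := ∫ ω, ξ 0 ω ∂μ with hAdef
  -- each ξ n is a.e. positive
  have h0 : μ (ξ 0 ⁻¹' Set.Ioi 0) = 1 := by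
    rw [← prob_compl_eq_zero_iff ((hmeas 0) measurableSet_Ioi)]
    rw [ae_iff] at hpos
    have heq : (ξ 0 ⁻¹' Set.Ioi 0)ᶜ = {ω | ¬ 0 < ξ 0 ω} := by
      ext ω; simp [Set.mem_compl_iff, Set.mem_preimage, Set.mem_Ioi]
    rw [heq]; exact hpos
  have hposn : ∀ n, ∀ᵐ ω ∂μ, 0 < ξ n ω := by
    intro n
    have hn : μ (ξ n ⁻¹' Set.Ioi 0) = 1 :=
      ((hident n).measure_mem_eq measurableSet_Ioi).trans h0
    rw [ae_iff]
    have : {ω | ¬ 0 < ξ n ω} = (ξ n ⁻¹' Set.Ioi 0)ᶜ := by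
      ext ω; simp [Set.mem_compl_iff, Set.mem_preimage, Set.mem_Ioi]
    rw [this, prob_compl_eq_zero_iff ((hmeas n) measurableSet_Ioi)]
    exact hn
  have hpos_all : ∀ᵐ ω ∂μ, ∀ n, 0 < ξ n ω := ae_all_iff.2 hposn
  -- SLLN for ξ
  have hslln1 : ∀ᵐ ω ∂μ, Tendsto
      (fun n : ℕ => (∑ i ∈ Finset.range n, ξ i ω) / n) atTop (𝓝 A) :=
    strong_law_ae_real ξ hint (fun i j hij => hindep.indepFun hij) hident
  -- SLLN for log ∘ ξ
  have hLindep : iIndepFun (fun i => Real.log ∘ ξ i) μ :=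
    hindep.comp (fun _ => Real.log) (fun _ => Real.measurable_log)
  have hLident : ∀ n, IdentDistrib (Real.log ∘ ξ n) (Real.log ∘ ξ 0) μ μ :=
    fun n => (hident n).comp Real.measurable_log
  have hLint : Integrable (Real.log ∘ ξ 0) μ := hL2.integrable one_le_two
  have hslln2 : ∀ᵐ ω ∂μ, Tendsto
      (fun n : ℕ => (∑ i ∈ Finset.range n, Real.log (ξ i ω)) / n) atTop (𝓝 m) :=
    strong_law_ae_real (fun i => Real.log ∘ ξ i) hLint
      (fun i j hij => hLindep.indepFun hij) hLident
  -- A > 0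
  have hA0 : 0 < A := by
    rw [hAdef, integral_pos_iff_support_of_nonneg_ae (hpos.mono fun ω h => le_of_lt h) hint]
    have hsub : ξ 0 ⁻¹' Set.Ioi 0 ⊆ Function.support (ξ 0) :=
      fun ω h => ne_of_gt h
    calc (0 : ENNReal) < 1 := by norm_num
      _ = μ (ξ 0 ⁻¹' Set.Ioi 0) := h0.symm
      _ ≤ μ (Function.support (ξ 0)) := measure_mono hsub
  -- auxiliary limits
  have hninv : Tendsto (fun n : ℕ => ((n : ℝ))⁻¹) atTop (𝓝 0) :=
    tendsto_inv_atTop_zero.comp tendsto_natCast_atTop_atTop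
  have hsubinv : Tendsto (fun n : ℕ => ((n : ℝ) - 1)⁻¹) atTop (𝓝 0) := by
    apply tendsto_inv_atTop_zero.comp
    exact tendsto_atTop_add_const_right atTop (-1) tendsto_natCast_atTop_atTop
  have hquot : Tendsto (fun n : ℕ => (n : ℝ) / ((n : ℝ) - 1)) atTop (𝓝 1) := by
    have h1 : Tendsto (fun n : ℕ => ((n : ℝ) - 1) / (n : ℝ)) atTop (𝓝 1) := by
      have : Tendsto (fun n : ℕ => 1 - ((n : ℝ))⁻¹) atTop (𝓝 (1 - 0)) :=
        tendsto_const_nhds.sub hninv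
      rw [sub_zero] at this
      refine this.congr' ?_
      filter_upwards [eventually_ge_atTop 1] with n hn
      have hn0 : (n : ℝ) ≠ 0 := by positivity
      field_simp
    have h2 := h1.inv₀ one_ne_zero
    rw [inv_one] at h2
    refine h2.congr (fun n => ?_)
    rw [inv_div]
  filter_upwards [hslln1, hslln2, hpos_all] with ω hA' hM' hp
  set S : ℕ → ℝ := fun n => ∑ i ∈ Finset.range n, ξ i ω with hS
  set T : ℕ → ℝ := fun n => ∑ i ∈ Finset.range n, Real.log (ξ i ω) with hT
  set g : ℕ → ℝ := fun n => (T n - Real.log (S n / n)) * ((n : ℝ) - 1)⁻¹ with hg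
  -- limit of g
  have ht1 : Tendsto (fun n : ℕ => T n * ((n : ℝ) - 1)⁻¹) atTop (𝓝 m) := by
    have := hM'.mul hquot
    rw [mul_one] at this
    refine this.congr' ?_
    filter_upwards [eventually_ge_atTop 2] with n hn
    have hn0 : (n : ℝ) ≠ 0 := by positivity
    have hn1 : (n : ℝ) - 1 ≠ 0 := by
      have : (2 : ℝ) ≤ n := by exact_mod_cast hn
      nlinarith
    field_simp
    rfl
  have ht2 : Tendsto (fun n : ℕ => Real.log (S n / n) * ((n : ℝ) - 1)⁻¹)
      atTop (𝓝 0) := by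
    have hlog : Tendsto (fun n : ℕ => Real.log (S n / n)) atTop (𝓝 (Real.log A)) :=
      ((Real.continuousAt_log (ne_of_gt hA0)).tendsto).comp hA'
    have := hlog.mul hsubinv
    rwa [mul_zero] at this
  have hgt : Tendsto g atTop (𝓝 m) := by
    have := ht1.sub ht2
    rw [sub_zero] at this
    refine this.congr (fun n => ?_)
    simp [hg, sub_mul]
  have hfin : Tendsto (fun n => Real.exp (g n)) atTop (𝓝 (Real.exp m)) :=
    (Real.continuous_exp.tendsto m).comp hgt
  refine hfin.congr' ?_
  filter_upwards [eventually_ge_atTop 2] with n hn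
  have hn0 : (0 : ℝ) < n := by
    have : (2 : ℝ) ≤ n := by exact_mod_cast hn
    linarith
  have hSn : 0 < S n :=
    Finset.sum_pos (fun i _ => hp i) ⟨0, Finset.mem_range.2 (by omega)⟩
  have hPn : 0 < ∏ i ∈ Finset.range n, ξ i ω :=
    Finset.prod_pos (fun i _ => hp i)
  have hb : 0 < ((n : ℝ) * ∏ i ∈ Finset.range n, ξ i ω) / S n :=
    div_pos (mul_pos hn0 hPn) hSn
  rw [Real.rpow_def_of_pos hb]
  congr 1
  have hlogb : Real.log (((n : ℝ) * ∏ i ∈ Finset.range n, ξ i ω) / S n)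
      = T n - Real.log (S n / n) := by
    rw [Real.log_div (ne_of_gt (mul_pos hn0 hPn)) (ne_of_gt hSn),
      Real.log_mul (ne_of_gt hn0) (ne_of_gt hPn),
      Real.log_prod (fun i _ => (hp i).ne'),
      Real.log_div (ne_of_gt hSn) (ne_of_gt hn0)]
    simp only [hT]
    ring
  rw [hlogb]
end

section
/- Let (ξ_n) be a sequence of independent identically distributed random variables such that P(ξ_1 > 1) = 1 and E(ξ_1) < ∞. Then the logarithmic Cauchy quotient means satisfy 𝓛_n(ξ_1,…,ξ_n) → e^{E(ln ξ_1)} almost surely as n → ∞. -/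
open MeasureTheory ProbabilityTheory Filter Topology

/-- If `w n / n → 0` for nonnegative `w`, then the running maximum also satisfies
`max_{i ≤ n} w i / n → 0`. -/
lemma aux_max_div_tendsto_zero (w : ℕ → ℝ) (hw : ∀ i, 0 ≤ w i)
    (h : Tendsto (fun n : ℕ => w n / n) atTop (𝓝 0)) :
    Tendsto (fun n : ℕ =>
      ((Finset.range (n + 1)).sup' Finset.nonempty_range_add_one w) / n) atTop (𝓝 0) := by
  rw [NormedAddCommGroup.tendsto_nhds_zero]
  intro ε hε
  have hε2 : 0 < ε / 2 := by linarith
  obtain ⟨N, hN⟩ := (Metric.tendsto_atTop.1 h) (ε / 2) hε2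
  set C : ℝ := ∑ i ∈ Finset.range (N + 1), w i with hC
  have hC0 : 0 ≤ C := Finset.sum_nonneg fun i _ => hw i
  have hCb : ∀ i ≤ N, w i ≤ C := by
    intro i hi
    exact Finset.single_le_sum (fun j _ => hw j)
      (Finset.mem_range.2 (Nat.lt_succ_of_le hi))
  -- eventually, C / n < ε/2
  have hCn : Tendsto (fun n : ℕ => C / n) atTop (𝓝 0) :=
    tendsto_const_nhds.div_atTop tendsto_natCast_atTop_atTop
  have h1 : ∀ᶠ n : ℕ in atTop, C / n < ε / 2 := by
    have := (Metric.tendsto_atTop.1 hCn) (ε / 2) hε2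
    obtain ⟨M, hM⟩ := this
    filter_upwards [eventually_ge_atTop M] with n hn
    have := hM n hn
    rw [Real.dist_eq, sub_zero] at this
    exact lt_of_abs_lt this
  filter_upwards [h1, eventually_ge_atTop 1] with n hn1 hn2
  have hn0 : (0 : ℝ) < n := by exact_mod_cast hn2
  have hMb : (Finset.range (n + 1)).sup' Finset.nonempty_range_add_one w ≤ C + ε / 2 * n := by
    apply Finset.sup'_le
    intro i hi
    have hi' : i ≤ n := Nat.lt_succ_iff.1 (Finset.mem_range.1 hi)
    rcases le_or_gt i N with hiN | hiN
    · have := hCb i hiN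
      nlinarith [mul_nonneg (le_of_lt hε2) (le_of_lt hn0)]
    · have hiN' : i ≥ N := le_of_lt hiN
      have := hN i hiN'
      rw [Real.dist_eq, sub_zero] at this
      have hwi : w i / i < ε / 2 := lt_of_abs_lt this
      have hi0 : (0 : ℝ) < i := by
        have : 0 < i := by omega
        exact_mod_cast this
      have : w i < ε / 2 * i := by
        rw [div_lt_iff₀ hi0] at hwi; linarith
      have hin : (i : ℝ) ≤ n := by exact_mod_cast hi'
      nlinarith
  have hM0 : 0 ≤ (Finset.range (n + 1)).sup' Finset.nonempty_range_add_one w :=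
    le_trans (hw 0) (Finset.le_sup' w (Finset.mem_range.2 (Nat.succ_pos n)))
  rw [Real.norm_eq_abs, abs_of_nonneg (div_nonneg hM0 (le_of_lt hn0))]
  calc (Finset.range (n + 1)).sup' Finset.nonempty_range_add_one w / n
      ≤ (C + ε / 2 * n) / n := by gcongr
    _ = C / n + ε / 2 * n / n := by rw [add_div]
    _ = C / n + ε / 2 := by rw [mul_div_assoc, div_self (ne_of_gt hn0), mul_one]
    _ < ε := by linarith

/-- `(n : ℝ) / (n - 1) → 1`. -/
lemma aux_n_div_n_sub_one : Tendsto (fun n : ℕ => (n : ℝ) / ((n : ℝ) - 1)) atTop (𝓝 1) := by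
  have h1 : Tendsto (fun n : ℕ => ((n : ℝ) - 1)) atTop atTop := by
    simpa [sub_eq_add_neg] using
      tendsto_atTop_add_const_right atTop (-1 : ℝ) tendsto_natCast_atTop_atTop
  have h2 : Tendsto (fun n : ℕ => ((n : ℝ) - 1)⁻¹) atTop (𝓝 0) :=
    tendsto_inv_atTop_zero.comp h1
  have h3 : Tendsto (fun n : ℕ => 1 + ((n : ℝ) - 1)⁻¹) atTop (𝓝 (1 + 0)) :=
    tendsto_const_nhds.add h2
  rw [add_zero] at h3
  apply h3.congr'
  filter_upwards [eventually_ge_atTop 2] with n hn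
  have hn1 : (1 : ℝ) < n := by
    have : (2 : ℝ) ≤ n := by exact_mod_cast hn
    linarith
  have hne : (n : ℝ) - 1 ≠ 0 := by linarith
  field_simp
  ring

/-- If `f n / n → L` then `f n / (n - 1) → L`. -/
lemma aux_div_sub_one {f : ℕ → ℝ} {L : ℝ}
    (h : Tendsto (fun n : ℕ => f n / n) atTop (𝓝 L)) :
    Tendsto (fun n : ℕ => f n / ((n : ℝ) - 1)) atTop (𝓝 L) := by
  have := h.mul aux_n_div_n_sub_one
  rw [mul_one] at this
  apply this.congr'
  filter_upwards [eventually_ge_atTop 2] with n hn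
  have hn1 : (1 : ℝ) < n := by
    have : (2 : ℝ) ≤ n := by exact_mod_cast hn
    linarith
  have hne : (n : ℝ) ≠ 0 := by linarith
  have hne1 : (n : ℝ) - 1 ≠ 0 := by linarith
  field_simp

/-- Deterministic core of the theorem. -/
lemma aux_key (x : ℕ → ℝ) (hx : ∀ i, 1 < x i) (E : ℝ)
    (hS : Tendsto (fun n : ℕ => (∑ i ∈ Finset.range n, Real.log (x i)) / n) atTop (𝓝 E)) :
    Tendsto (fun n : ℕ =>
      (∑ i ∈ Finset.range n,
          (∏ j ∈ (Finset.range n).erase i, x j) ^ (((n : ℝ) - 1)⁻¹) * Real.log (x i)) /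
        (∑ i ∈ Finset.range n, Real.log (x i)))
      atTop (𝓝 (Real.exp E)) := by
  set w : ℕ → ℝ := fun i => Real.log (x i) with hw
  have hwpos : ∀ i, 0 < w i := fun i => Real.log_pos (hx i)
  have hxpos : ∀ i, 0 < x i := fun i => lt_trans one_pos (hx i)
  set S : ℕ → ℝ := fun n => ∑ i ∈ Finset.range n, w i with hSdef
  set M : ℕ → ℝ := fun n => (Finset.range (n + 1)).sup' Finset.nonempty_range_add_one w with hMdef
  -- w n / n → 0
  have hwn : Tendsto (fun n : ℕ => w n / n) atTop (𝓝 0) := by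
    have hS1 : Tendsto (fun n : ℕ => S (n + 1) / ((n : ℝ) + 1)) atTop (𝓝 E) := by
      have := hS.comp (tendsto_add_atTop_nat 1)
      apply this.congr
      intro n
      simp [Function.comp, hSdef]
    have hq : Tendsto (fun n : ℕ => ((n : ℝ) + 1) / n) atTop (𝓝 1) := by
      have := aux_n_div_n_sub_one.comp (tendsto_add_atTop_nat 1)
      apply this.congr
      intro n
      simp [Nat.cast_add]
    have hS2 : Tendsto (fun n : ℕ => S (n + 1) / n) atTop (𝓝 E) := by
      have := hS1.mul hq
      rw [mul_one] at this
      apply this.congr'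
      filter_upwards [eventually_ge_atTop 1] with n hn
      have hn0 : (0 : ℝ) < n := by exact_mod_cast hn
      have hn1 : (0 : ℝ) < (n : ℝ) + 1 := by linarith
      field_simp
    have := hS2.sub hS
    rw [sub_self] at this
    apply this.congr
    intro n
    have : S (n + 1) = S n + w n := by
      simp [hSdef, Finset.sum_range_succ]
    rw [this]
    ring
  have hMn : Tendsto (fun n : ℕ => M n / n) atTop (𝓝 0) :=
    aux_max_div_tendsto_zero w (fun i => le_of_lt (hwpos i)) hwn
  have hSm : Tendsto (fun n : ℕ => S n / ((n : ℝ) - 1)) atTop (𝓝 E) := aux_div_sub_one hS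
  have hMm : Tendsto (fun n : ℕ => M n / ((n : ℝ) - 1)) atTop (𝓝 0) := aux_div_sub_one hMn
  -- bounds
  have hA : Tendsto (fun n : ℕ => Real.exp ((S n - M n) / ((n : ℝ) - 1))) atTop
      (𝓝 (Real.exp E)) := by
    have h1 : Tendsto (fun n : ℕ => S n / ((n : ℝ) - 1) - M n / ((n : ℝ) - 1)) atTop
        (𝓝 (E - 0)) := hSm.sub hMm
    rw [sub_zero] at h1
    have := (Real.continuous_exp.tendsto E).comp h1
    apply this.congr
    intro n
    simp only [Function.comp_apply, sub_div]
  have hB : Tendsto (fun n : ℕ => Real.exp (S n / ((n : ℝ) - 1))) atTop (𝓝 (Real.exp E)) :=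
    (Real.continuous_exp.tendsto E).comp hSm
  apply tendsto_of_tendsto_of_tendsto_of_le_of_le' hA hB
  · -- lower bound
    filter_upwards [eventually_ge_atTop 2] with n hn
    have hn1 : (1 : ℝ) < n := by
      have : (2 : ℝ) ≤ n := by exact_mod_cast hn
      linarith
    have hm : (0 : ℝ) < (n : ℝ) - 1 := by linarith
    have hSpos : 0 < S n := Finset.sum_pos (fun i _ => hwpos i)
      ⟨0, Finset.mem_range.2 (by omega)⟩
    have hai : ∀ i ∈ Finset.range n,
        (∏ j ∈ (Finset.range n).erase i, x j) ^ (((n : ℝ) - 1)⁻¹)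
          = Real.exp ((S n - w i) / ((n : ℝ) - 1)) := by
      intro i hi
      have hppos : 0 < ∏ j ∈ (Finset.range n).erase i, x j :=
        Finset.prod_pos fun j _ => hxpos j
      have hsum : ∑ j ∈ (Finset.range n).erase i, Real.log (x j) = S n - w i := by
        have := Finset.add_sum_erase (Finset.range n) (fun j => Real.log (x j)) hi
        simp only [hSdef, hw] at this ⊢
        linarith
      rw [Real.rpow_def_of_pos hppos, Real.log_prod (fun j _ => ne_of_gt (hxpos j)),
        hsum, div_eq_mul_inv]
    have hwle : ∀ i ∈ Finset.range n, w i ≤ M n := by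
      intro i hi
      apply Finset.le_sup'
      have : i < n := Finset.mem_range.1 hi
      exact Finset.mem_range.2 (by omega)
    rw [le_div_iff₀ hSpos]
    calc Real.exp ((S n - M n) / ((n : ℝ) - 1)) * S n
        = ∑ i ∈ Finset.range n, Real.exp ((S n - M n) / ((n : ℝ) - 1)) * w i := by
          rw [← Finset.mul_sum]
      _ ≤ ∑ i ∈ Finset.range n,
            (∏ j ∈ (Finset.range n).erase i, x j) ^ (((n : ℝ) - 1)⁻¹) * w i := by
          apply Finset.sum_le_sum
          intro i hi
          rw [hai i hi]
          apply mul_le_mul_of_nonneg_right _ (le_of_lt (hwpos i))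
          apply Real.exp_le_exp.2
          apply div_le_div_of_nonneg_right _ hm.le
          have := hwle i hi
          linarith
  · -- upper bound
    filter_upwards [eventually_ge_atTop 2] with n hn
    have hn1 : (1 : ℝ) < n := by
      have : (2 : ℝ) ≤ n := by exact_mod_cast hn
      linarith
    have hm : (0 : ℝ) < (n : ℝ) - 1 := by linarith
    have hSpos : 0 < S n := Finset.sum_pos (fun i _ => hwpos i)
      ⟨0, Finset.mem_range.2 (by omega)⟩
    have hai : ∀ i ∈ Finset.range n,
        (∏ j ∈ (Finset.range n).erase i, x j) ^ (((n : ℝ) - 1)⁻¹)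
          = Real.exp ((S n - w i) / ((n : ℝ) - 1)) := by
      intro i hi
      have hppos : 0 < ∏ j ∈ (Finset.range n).erase i, x j :=
        Finset.prod_pos fun j _ => hxpos j
      have hsum : ∑ j ∈ (Finset.range n).erase i, Real.log (x j) = S n - w i := by
        have := Finset.add_sum_erase (Finset.range n) (fun j => Real.log (x j)) hi
        simp only [hSdef, hw] at this ⊢
        linarith
      rw [Real.rpow_def_of_pos hppos, Real.log_prod (fun j _ => ne_of_gt (hxpos j)),
        hsum, div_eq_mul_inv]
    rw [div_le_iff₀ hSpos]
    calc (∑ i ∈ Finset.range n,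
            (∏ j ∈ (Finset.range n).erase i, x j) ^ (((n : ℝ) - 1)⁻¹) * w i)
        ≤ ∑ i ∈ Finset.range n, Real.exp (S n / ((n : ℝ) - 1)) * w i := by
          apply Finset.sum_le_sum
          intro i hi
          rw [hai i hi]
          apply mul_le_mul_of_nonneg_right _ (le_of_lt (hwpos i))
          apply Real.exp_le_exp.2
          apply div_le_div_of_nonneg_right _ hm.le
          have := hwpos i
          linarith
      _ = Real.exp (S n / ((n : ℝ) - 1)) * S n := by rw [← Finset.mul_sum]

/-- Strong law of large numbers for logarithmic Cauchy quotient means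
of i.i.d. random variables. -/
theorem logCauchyQuotient_slln
    {Ω : Type*} [MeasurableSpace Ω] (μ : Measure Ω) [IsProbabilityMeasure μ]
    (ξ : ℕ → Ω → ℝ) (hmeas : ∀ n, Measurable (ξ n))
    (hindep : iIndepFun ξ μ)
    (hident : ∀ n, IdentDistrib (ξ n) (ξ 0) μ μ)
    (hgt : ∀ᵐ ω ∂μ, 1 < ξ 0 ω)
    (hint : Integrable (ξ 0) μ) :
    ∀ᵐ ω ∂μ, Tendsto
      (fun n : ℕ =>
        (∑ i ∈ Finset.range n,
            (∏ j ∈ (Finset.range n).erase i, ξ j ω) ^ (((n : ℝ) - 1)⁻¹) *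
              Real.log (ξ i ω)) /
          (∑ i ∈ Finset.range n, Real.log (ξ i ω)))
      atTop
      (𝓝 (Real.exp (∫ ω, Real.log (ξ 0 ω) ∂μ))) := by
  set X : ℕ → Ω → ℝ := fun n ω => Real.log (ξ n ω) with hX
  have hXmeas : ∀ n, Measurable (X n) := fun n => Real.measurable_log.comp (hmeas n)
  have hXint : Integrable (X 0) μ := by
    apply Integrable.mono hint (hXmeas 0).aestronglyMeasurable
    filter_upwards [hgt] with ω hω
    show ‖Real.log (ξ 0 ω)‖ ≤ ‖ξ 0 ω‖
    rw [Real.norm_eq_abs, Real.norm_eq_abs]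
    have h0 : 0 < ξ 0 ω := lt_trans one_pos hω
    have hlog : 0 ≤ Real.log (ξ 0 ω) := Real.log_nonneg (le_of_lt hω)
    rw [abs_of_nonneg hlog, abs_of_pos h0]
    have := Real.log_le_sub_one_of_pos h0
    linarith
  have hXindep : Pairwise (Function.onFun (IndepFun · · μ) X) := by
    intro i j hij
    exact (hindep.indepFun hij).comp Real.measurable_log Real.measurable_log
  have hXident : ∀ i, IdentDistrib (X i) (X 0) μ μ := fun i =>
    (hident i).comp Real.measurable_log
  have hSLLN := strong_law_ae_real X hXint hXindep hXident
  have hgt' : ∀ᵐ ω ∂μ, ∀ i, 1 < ξ i ω := by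
    rw [ae_all_iff]
    intro i
    exact (hident i).symm.ae_snd (p := fun x => 1 < x) measurableSet_Ioi hgt
  filter_upwards [hSLLN, hgt'] with ω hSω hgtω
  exact aux_key (fun i => ξ i ω) hgtω _ hSω
end

section
/- Let (ξ_n) be a sequence of independent identically distributed random variables such that P(ξ_1 > 1) = 1 and Var(ln ξ_1) ∈ (0,∞). Then the multiplicative Cauchy quotient means satisfy 𝓟_n(ξ_1,…,ξ_n) → e^{E(ln ξ_1)} almost surely as n → ∞. -/
open MeasureTheory ProbabilityTheory Filter Topology

lemma multCQ_abs_bound {y : ℝ} (hy : 0 < y) : |y * Real.log y| ≤ y ^ 2 + 1 := by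
  rcases le_or_gt 1 y with h | h
  · have h1 : Real.log y ≤ y - 1 := Real.log_le_sub_one_of_pos hy
    have h2 : 0 ≤ Real.log y := Real.log_nonneg h
    rw [abs_of_nonneg (mul_nonneg hy.le h2)]
    nlinarith
  · have h1 : Real.log y⁻¹ ≤ y⁻¹ - 1 := Real.log_le_sub_one_of_pos (inv_pos.2 hy)
    rw [Real.log_inv] at h1
    have h2 : Real.log y ≤ 0 := Real.log_nonpos hy.le h.le
    rw [abs_of_nonpos (mul_nonpos_of_nonneg_of_nonpos hy.le h2)]
    have h3 : y * y⁻¹ = 1 := mul_inv_cancel₀ hy.ne'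
    nlinarith

lemma multCQ_aux (Y : ℕ → ℝ) (hY : ∀ i, 0 < Y i) (m c : ℝ) (hm : 0 < m)
    (h1 : Tendsto (fun n : ℕ => (∑ i ∈ Finset.range n, Y i) / n) atTop (𝓝 m))
    (h2 : Tendsto (fun n : ℕ => (∑ i ∈ Finset.range n, Y i * Real.log (Y i)) / n) atTop (𝓝 c)) :
    Tendsto (fun n : ℕ => (((n : ℝ) * Real.log n)⁻¹ *
        ∑ i ∈ Finset.range n, Real.log ((∑ j ∈ Finset.range n, Y j) / Y i) * Y i))
      atTop (𝓝 m) := by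
  set S : ℕ → ℝ := fun n => ∑ j ∈ Finset.range n, Y j with hS
  set a : ℕ → ℝ := fun n => S n / n with ha
  set t : ℕ → ℝ := fun n => (∑ i ∈ Finset.range n, Y i * Real.log (Y i)) / n with ht
  have hlogn : Tendsto (fun n : ℕ => (Real.log n)⁻¹) atTop (𝓝 0) := by
    have : Tendsto (fun n : ℕ => Real.log n) atTop atTop :=
      Real.tendsto_log_atTop.comp tendsto_natCast_atTop_atTop
    exact this.inv_tendsto_atTop
  have hloga : Tendsto (fun n : ℕ => Real.log (a n)) atTop (𝓝 (Real.log m)) :=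
    ((Real.continuousAt_log hm.ne').tendsto).comp h1
  have hlim : Tendsto (fun n : ℕ => a n * (1 + Real.log (a n) * (Real.log n)⁻¹)
      - (Real.log n)⁻¹ * t n) atTop (𝓝 m) := by
    have A : Tendsto (fun n : ℕ => a n * ((1:ℝ) + Real.log (a n) * (Real.log n)⁻¹))
        atTop (𝓝 (m * (1 + Real.log m * 0))) :=
      h1.mul ((tendsto_const_nhds (x := (1:ℝ))).add (hloga.mul hlogn))
    have B := A.sub (hlogn.mul h2)
    simpa using B
  apply hlim.congr'
  filter_upwards [eventually_ge_atTop 2] with n hn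
  have hn0 : (0:ℝ) < n := by positivity
  have hSpos : 0 < S n := Finset.sum_pos (fun i _ => hY i) (by simp; omega)
  have hapos : 0 < a n := div_pos hSpos hn0
  have hlognpos : 0 < Real.log n := Real.log_pos (by exact_mod_cast by omega)
  have hlogS : Real.log (S n) = Real.log n + Real.log (a n) := by
    have : S n = n * a n := by show S n = n * (S n / n); field_simp [hn0.ne']
    rw [this, Real.log_mul hn0.ne' hapos.ne']
  have hsum : ∑ i ∈ Finset.range n, Real.log (S n / Y i) * Y i
      = Real.log (S n) * S n - ∑ i ∈ Finset.range n, Y i * Real.log (Y i) := by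
    rw [Finset.mul_sum, ← Finset.sum_sub_distrib]
    apply Finset.sum_congr rfl
    intro i _
    rw [Real.log_div hSpos.ne' (hY i).ne']
    ring
  rw [hsum, hlogS]
  field_simp [ha, ht]
  have e1 : a n * n = S n := by show S n / n * n = S n; field_simp [hn0.ne']
  have e2 : t n * n = ∑ i ∈ Finset.range n, Y i * Real.log (Y i) := by
    show (∑ i ∈ Finset.range n, Y i * Real.log (Y i)) / n * n = _; field_simp [hn0.ne']
  linear_combination (Real.log n + Real.log (a n)) * e1 - e2

/-- Strong law of large numbers for multiplicative (power) Cauchy quotient means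
of i.i.d. random variables. -/
theorem multCauchyQuotient_slln
    {Ω : Type*} [MeasurableSpace Ω] (μ : Measure Ω) [IsProbabilityMeasure μ]
    (ξ : ℕ → Ω → ℝ) (hmeas : ∀ n, Measurable (ξ n))
    (hindep : iIndepFun ξ μ)
    (hident : ∀ n, IdentDistrib (ξ n) (ξ 0) μ μ)
    (hgt : ∀ᵐ ω ∂μ, 1 < ξ 0 ω)
    (hL2 : MemLp (fun ω => Real.log (ξ 0 ω)) 2 μ)
    (hvarpos : 0 < variance (fun ω => Real.log (ξ 0 ω)) μ) :
    ∀ᵐ ω ∂μ, Tendsto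
      (fun n : ℕ =>
        (∏ i ∈ Finset.range n, (ξ i ω) ^
            (Real.log (Real.log (∏ j ∈ Finset.range n, ξ j ω) / Real.log (ξ i ω))))
          ^ (((n : ℝ) * Real.log n)⁻¹))
      atTop
      (𝓝 (Real.exp (∫ ω, Real.log (ξ 0 ω) ∂μ))) := by
  set Y : ℕ → Ω → ℝ := fun i ω => Real.log (ξ i ω) with hYdef
  set f : ℝ → ℝ := fun x => Real.log x * Real.log (Real.log x) with hfdef
  have hf : Measurable f := Real.measurable_log.mul (Real.measurable_log.comp Real.measurable_log)
  set Z : ℕ → Ω → ℝ := fun i ω => f (ξ i ω) with hZdef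
  have hYint : Integrable (Y 0) μ := hL2.integrable one_le_two
  have hYident : ∀ i, IdentDistrib (Y i) (Y 0) μ μ :=
    fun i => (hident i).comp Real.measurable_log
  have hYindep : Pairwise (Function.onFun (IndepFun · · μ) Y) := fun i j hij =>
    (hindep.indepFun hij).comp Real.measurable_log Real.measurable_log
  have hZident : ∀ i, IdentDistrib (Z i) (Z 0) μ μ := fun i => (hident i).comp hf
  have hZindep : Pairwise (Function.onFun (IndepFun · · μ) Z) := fun i j hij =>
    (hindep.indepFun hij).comp hf hf
  have hZint : Integrable (Z 0) μ := by
    have hg : Integrable (fun ω => (Y 0 ω) ^ 2 + 1) μ :=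
      hL2.integrable_sq.add (integrable_const 1)
    refine hg.mono' ((hf.comp (hmeas 0)).aestronglyMeasurable) ?_
    filter_upwards [hgt] with ω hω
    have hy : 0 < Y 0 ω := Real.log_pos hω
    simpa only [Real.norm_eq_abs] using multCQ_abs_bound hy
  have hgt_all : ∀ᵐ ω ∂μ, ∀ i, 1 < ξ i ω := by
    rw [ae_all_iff]
    exact fun i => (hident i).symm.ae_snd (p := fun x => 1 < x) measurableSet_Ioi hgt
  have hY0pos : ∀ᵐ ω ∂μ, 0 < Y 0 ω := hgt.mono fun ω h => Real.log_pos h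
  have hmpos : 0 < ∫ ω, Y 0 ω ∂μ := by
    have hnn : 0 ≤ᵐ[μ] Y 0 := hY0pos.mono fun ω h => h.le
    rcases (integral_nonneg_of_ae hnn).lt_or_eq with h | h
    · exact h
    · exfalso
      have hzero : Y 0 =ᵐ[μ] 0 := (integral_eq_zero_iff_of_nonneg_ae hnn hYint).1 h.symm
      have : ∀ᵐ _ ∂μ, False := by
        filter_upwards [hY0pos, hzero] with ω h1 h2
        exact lt_irrefl 0 (h2 ▸ h1)
      have hne : (ae μ).NeBot := ae_neBot.2 (IsProbabilityMeasure.ne_zero μ)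
      exact this.exists.choose_spec
  have slln1 := strong_law_ae_real Y hYint hYindep hYident
  have slln2 := strong_law_ae_real Z hZint hZindep hZident
  filter_upwards [hgt_all, slln1, slln2] with ω hpos hs1 hs2
  have hξpos : ∀ i, 0 < ξ i ω := fun i => lt_trans one_pos (hpos i)
  have hYpos : ∀ i, 0 < Y i ω := fun i => Real.log_pos (hpos i)
  have hs2' : Tendsto (fun n : ℕ =>
      (∑ i ∈ Finset.range n, Y i ω * Real.log (Y i ω)) / n) atTop (𝓝 (μ[Z 0])) := hs2
  have hB := multCQ_aux (fun i => Y i ω) hYpos _ _ hmpos hs1 hs2'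
  have := (Real.continuous_exp.tendsto _).comp hB
  apply this.congr
  intro n
  have hlogprod : Real.log (∏ j ∈ Finset.range n, ξ j ω) = ∑ j ∈ Finset.range n, Y j ω :=
    Real.log_prod (fun j _ => (hξpos j).ne')
  have hbase : ∏ i ∈ Finset.range n, (ξ i ω) ^
      (Real.log (Real.log (∏ j ∈ Finset.range n, ξ j ω) / Real.log (ξ i ω)))
      = Real.exp (∑ i ∈ Finset.range n,
          Real.log ((∑ j ∈ Finset.range n, Y j ω) / Y i ω) * Y i ω) := by
    have hterm : ∀ i ∈ Finset.range n, (ξ i ω) ^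
        (Real.log (Real.log (∏ j ∈ Finset.range n, ξ j ω) / Real.log (ξ i ω)))
        = Real.exp (Real.log ((∑ j ∈ Finset.range n, Y j ω) / Y i ω) * Y i ω) := by
      intro i _
      rw [Real.rpow_def_of_pos (hξpos i), hlogprod]
      exact congrArg Real.exp (mul_comm _ _)
    rw [Finset.prod_congr rfl hterm, ← Real.exp_sum]
  show Real.exp _ = _
  rw [hbase, Real.rpow_def_of_pos (Real.exp_pos _), Real.log_exp]
  exact congrArg Real.exp (mul_comm _ _)
end

section
/- Let (ξ_n) be a sequence of independent identically distributed random variables such that P(ξ_1 > 1) = 1 and Var(ln ξ_1) ∈ (0,∞). Then ln(n) · ( 𝓟_n(ξ_1,…,ξ_n) − e^{E(ln ξ_1)} ) converges in probability, as n → ∞, to the constant e^{E(ln ξ_1)} · ( ln(E(ln ξ_1)) · E(ln ξ_1) − E( ln(ξ_1) · ln(ln ξ_1) ) ). -/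
open MeasureTheory ProbabilityTheory Filter Topology

namespace MCQAux

variable {Ω : Type*} [MeasurableSpace Ω] {μ : Measure Ω}

lemma tim_congr' {f g : ℕ → Ω → ℝ} {h : Ω → ℝ}
    (hfg : ∀ᶠ n in atTop, f n =ᵐ[μ] g n)
    (hf : TendstoInMeasure μ f atTop h) : TendstoInMeasure μ g atTop h := by
  intro ε hε
  refine (hf ε hε).congr' ?_
  filter_upwards [hfg] with n hn
  apply measure_congr
  rw [Filter.eventuallyEq_set]
  filter_upwards [hn] with x hx
  simp [hx]

lemma tim_add {f g : ℕ → Ω → ℝ} {a b : ℝ}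
    (hf : TendstoInMeasure μ f atTop (fun _ => a))
    (hg : TendstoInMeasure μ g atTop (fun _ => b)) :
    TendstoInMeasure μ (fun n ω => f n ω + g n ω) atTop (fun _ => a + b) := by
  rw [tendstoInMeasure_iff_dist] at hf hg ⊢
  intro ε hε
  have h2 : (0 : ℝ) < ε / 2 := by linarith
  have key : ∀ n, μ {x | ε ≤ dist (f n x + g n x) (a + b)} ≤
      μ {x | ε / 2 ≤ dist (f n x) a} + μ {x | ε / 2 ≤ dist (g n x) b} := by
    intro n
    refine le_trans (measure_mono ?_) (measure_union_le _ _)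
    intro x hx
    by_contra hc
    simp only [Set.mem_union, Set.mem_setOf_eq, not_or, not_le] at hc
    have := dist_add_add_le (f n x) (g n x) a b
    simp only [Set.mem_setOf_eq] at hx
    linarith [hc.1, hc.2]
  have h0 : Tendsto (fun n => μ {x | ε / 2 ≤ dist (f n x) a} + μ {x | ε / 2 ≤ dist (g n x) b})
      atTop (𝓝 0) := by
    have := (hf _ h2).add (hg _ h2)
    simpa using this
  exact tendsto_of_tendsto_of_tendsto_of_le_of_le tendsto_const_nhds h0
    (fun n => zero_le') key

lemma tim_const_mul {f : ℕ → Ω → ℝ} {a c : ℝ}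
    (hf : TendstoInMeasure μ f atTop (fun _ => a)) :
    TendstoInMeasure μ (fun n ω => c * f n ω) atTop (fun _ => c * a) := by
  rw [tendstoInMeasure_iff_dist] at hf ⊢
  rcases eq_or_ne c 0 with rfl | hc
  · intro ε hε
    have he : ∀ n, {x : Ω | ε ≤ dist (0 * f n x) (0 * a)} = ∅ := by
      intro n; ext x; simp [hε.not_ge]
    simp only [he, measure_empty]
    exact tendsto_const_nhds
  · intro ε hε
    have habs : 0 < |c| := abs_pos.2 hc
    have := hf (ε / |c|) (div_pos hε habs)
    refine this.congr fun n => ?_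
    congr 1
    ext x
    simp only [Set.mem_setOf_eq, Real.dist_eq, ← mul_sub, abs_mul]
    rw [div_le_iff₀ habs, mul_comm]

lemma tim_mul_zero [IsFiniteMeasure μ] {f g : ℕ → Ω → ℝ} {b : ℝ}
    (hf : TendstoInMeasure μ f atTop (fun _ => 0))
    (hgm : ∀ n, AEStronglyMeasurable (g n) μ)
    (hg : ∀ᵐ ω ∂μ, Tendsto (fun n => g n ω) atTop (𝓝 b)) :
    TendstoInMeasure μ (fun n ω => f n ω * g n ω) atTop (fun _ => 0) := by
  have hgim : TendstoInMeasure μ g atTop (fun _ => b) :=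
    tendstoInMeasure_of_tendsto_ae hgm hg
  rw [tendstoInMeasure_iff_dist] at hf hgim ⊢
  intro ε hε
  have hb1 : (0 : ℝ) < |b| + 1 := by positivity
  have key : ∀ n, μ {x | ε ≤ dist (f n x * g n x) 0} ≤
      μ {x | ε / (|b| + 1) ≤ dist (f n x) 0} + μ {x | 1 ≤ dist (g n x) b} := by
    intro n
    refine le_trans (measure_mono ?_) (measure_union_le _ _)
    intro x hx
    by_contra hc
    simp only [Set.mem_union, Set.mem_setOf_eq, not_or, not_le, Real.dist_eq, sub_zero] at hc hx
    have h1 : |g n x| < |b| + 1 := by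
      have := abs_sub_abs_le_abs_sub (g n x) b
      linarith [hc.2]
    have h2 : |f n x * g n x| < ε := by
      rw [abs_mul]
      calc |f n x| * |g n x| ≤ |f n x| * (|b| + 1) :=
              mul_le_mul_of_nonneg_left h1.le (abs_nonneg _)
        _ < (ε / (|b| + 1)) * (|b| + 1) := mul_lt_mul_of_pos_right hc.1 hb1
        _ = ε := div_mul_cancel₀ _ hb1.ne'
    linarith
  have h0 : Tendsto (fun n => μ {x | ε / (|b| + 1) ≤ dist (f n x) 0} +
      μ {x | 1 ≤ dist (g n x) b}) atTop (𝓝 0) := by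
    have := (hf _ (div_pos hε hb1)).add (hgim 1 one_pos)
    simpa using this
  exact tendsto_of_tendsto_of_tendsto_of_le_of_le tendsto_const_nhds h0
    (fun n => zero_le') key

noncomputable def psi (t : ℝ) : ℝ := if t = 0 then 1 else (Real.exp t - 1) / t

lemma psi_meas : Measurable psi := by
  unfold psi
  exact Measurable.ite (measurableSet_singleton 0) measurable_const
    ((Real.measurable_exp.sub measurable_const).div measurable_id)

lemma psi_tendsto : Tendsto psi (𝓝 0) (𝓝 1) := by
  rw [← nhdsNE_sup_pure (0 : ℝ)]
  rw [Filter.tendsto_sup]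
  constructor
  · have h := hasDerivAt_iff_tendsto_slope.1 (Real.hasDerivAt_exp 0)
    rw [Real.exp_zero] at h
    refine h.congr' ?_
    filter_upwards [self_mem_nhdsWithin] with t ht
    simp only [Set.mem_compl_iff, Set.mem_singleton_iff] at ht
    simp [slope_def_field, psi, ht, Real.exp_zero]
  · have : psi 0 = 1 := by simp [psi]
    simpa [this] using tendsto_pure_nhds psi (0 : ℝ)

lemma key_ident (c t : ℝ) : c * (Real.exp t - 1) = (c * t) * psi t := by
  rcases eq_or_ne t 0 with rfl | ht
  · simp
  · rw [psi, if_neg ht]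
    field_simp

lemma abs_mul_log_le (x : ℝ) (hx : 0 < x) : |x * Real.log x| ≤ 1 + x ^ 2 := by
  rcases le_or_gt x 1 with h1 | h1
  · have hlog : Real.log x ≤ 0 := Real.log_nonpos hx.le h1
    have h2 : Real.log x⁻¹ ≤ x⁻¹ - 1 := Real.log_le_sub_one_of_pos (inv_pos.2 hx)
    rw [Real.log_inv] at h2
    have h3 : x * (-Real.log x) ≤ x * (x⁻¹ - 1) :=
      mul_le_mul_of_nonneg_left h2 hx.le
    have h4 : x * x⁻¹ = 1 := mul_inv_cancel₀ hx.ne'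
    rw [abs_of_nonpos (mul_nonpos_of_nonneg_of_nonpos hx.le hlog)]
    nlinarith [sq_nonneg x]
  · have hlog : 0 ≤ Real.log x := Real.log_nonneg h1.le
    have h2 : Real.log x ≤ x - 1 := Real.log_le_sub_one_of_pos hx
    rw [abs_of_nonneg (mul_nonneg hx.le hlog)]
    nlinarith

end MCQAux

open MCQAux

/-- Limit theorem in probability, with `ln n` scaling, for multiplicative (power)
Cauchy quotient means of i.i.d. random variables: the limit is the deterministic
constant `e^{E(ln ξ₁)} (ln(E(ln ξ₁)) E(ln ξ₁) − E(ln(ξ₁) ln(ln ξ₁)))`. -/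
theorem multCauchyQuotient_tendstoInMeasure
    {Ω : Type*} [MeasurableSpace Ω] (μ : Measure Ω) [IsProbabilityMeasure μ]
    (ξ : ℕ → Ω → ℝ) (hmeas : ∀ n, Measurable (ξ n))
    (hindep : iIndepFun ξ μ)
    (hident : ∀ n, IdentDistrib (ξ n) (ξ 0) μ μ)
    (hgt : ∀ᵐ ω ∂μ, 1 < ξ 0 ω)
    (hL2 : MemLp (fun ω => Real.log (ξ 0 ω)) 2 μ)
    (hvarpos : 0 < variance (fun ω => Real.log (ξ 0 ω)) μ) :
    TendstoInMeasure μ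
      (fun n : ℕ => fun ω => Real.log n *
        ((∏ i ∈ Finset.range n, (ξ i ω) ^
            (Real.log (Real.log (∏ j ∈ Finset.range n, ξ j ω) / Real.log (ξ i ω))))
          ^ (((n : ℝ) * Real.log n)⁻¹)
          - Real.exp (∫ ω', Real.log (ξ 0 ω') ∂μ)))
      atTop
      (fun _ => Real.exp (∫ ω, Real.log (ξ 0 ω) ∂μ) *
        (Real.log (∫ ω, Real.log (ξ 0 ω) ∂μ) * (∫ ω, Real.log (ξ 0 ω) ∂μ)
          - ∫ ω, Real.log (ξ 0 ω) * Real.log (Real.log (ξ 0 ω)) ∂μ)) := by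
  classical
  set L : ℕ → Ω → ℝ := fun i ω => Real.log (ξ i ω) with hL_def
  set m : ℝ := ∫ ω, L 0 ω ∂μ with hm_def
  set Y : ℕ → Ω → ℝ := fun i ω => L i ω * Real.log (L i ω) with hY_def
  set τ : ℝ := ∫ ω, Y 0 ω ∂μ with hτ_def
  set S : ℕ → Ω → ℝ := fun n ω => ∑ i ∈ Finset.range n, L i ω with hS_def
  set T : ℕ → Ω → ℝ := fun n ω => ∑ i ∈ Finset.range n, Y i ω with hT_def
  set B : ℕ → Ω → ℝ := fun n ω => (S n ω / n) * Real.log (S n ω / n) - T n ω / n with hB_def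
  set A : ℕ → Ω → ℝ := fun n ω => Real.log n * (S n ω / n - m) with hA_def
  set D : ℕ → Ω → ℝ := fun n ω => (S n ω / n - m) + B n ω / Real.log n with hD_def
  -- measurability
  have hLmeas : ∀ i, Measurable (L i) := fun i => Real.measurable_log.comp (hmeas i)
  have hYmeas : ∀ i, Measurable (Y i) := fun i =>
    (hLmeas i).mul (Real.measurable_log.comp (hLmeas i))
  have hSmeas : ∀ n, Measurable (S n) := fun n => Finset.measurable_sum _ (fun i _ => hLmeas i)
  have hTmeas : ∀ n, Measurable (T n) := fun n => Finset.measurable_sum _ (fun i _ => hYmeas i)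
  have hBmeas : ∀ n, Measurable (B n) := fun n =>
    (((hSmeas n).div_const _).mul (Real.measurable_log.comp ((hSmeas n).div_const _))).sub
      ((hTmeas n).div_const _)
  have hDmeas : ∀ n, Measurable (D n) := fun n =>
    (((hSmeas n).div_const _).sub measurable_const).add ((hBmeas n).div_const _)
  -- positivity a.e.
  have hgt' : ∀ i, ∀ᵐ ω ∂μ, 1 < ξ i ω := by
    intro i
    have h0 : μ {ω | ¬ 1 < ξ 0 ω} = 0 := hgt
    have heq : μ (ξ i ⁻¹' Set.Iic 1) = μ (ξ 0 ⁻¹' Set.Iic 1) :=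
      (hident i).measure_mem_eq measurableSet_Iic
    have : μ {ω | ¬ 1 < ξ i ω} = 0 := by
      have h1 : {ω | ¬ 1 < ξ i ω} = ξ i ⁻¹' Set.Iic 1 := by
        ext ω; simp [not_lt, Set.mem_Iic]
      have h2 : {ω | ¬ 1 < ξ 0 ω} = ξ 0 ⁻¹' Set.Iic 1 := by
        ext ω; simp [not_lt, Set.mem_Iic]
      rw [h1, heq, ← h2, h0]
    exact this
  have hG : ∀ᵐ ω ∂μ, ∀ i, 1 < ξ i ω := ae_all_iff.2 hgt'
  -- identic distribution and independence of L, Y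
  have hidentL : ∀ i, IdentDistrib (L i) (L 0) μ μ := fun i =>
    (hident i).comp Real.measurable_log
  have hgY : Measurable (fun x : ℝ => Real.log x * Real.log (Real.log x)) :=
    Real.measurable_log.mul (Real.measurable_log.comp Real.measurable_log)
  have hidentY : ∀ i, IdentDistrib (Y i) (Y 0) μ μ := fun i => (hident i).comp hgY
  have hpairL : Pairwise (Function.onFun (IndepFun · · μ) L) := fun i j hij =>
    (hindep.indepFun hij).comp Real.measurable_log Real.measurable_log
  have hpairY : Pairwise (Function.onFun (IndepFun · · μ) Y) := fun i j hij =>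
    (hindep.indepFun hij).comp hgY hgY
  -- integrability
  have hLint : Integrable (L 0) μ := hL2.integrable one_le_two
  have hL2i : ∀ i, MemLp (L i) 2 μ := fun i => (hidentL i).symm.memLp_snd hL2
  have hYint : Integrable (Y 0) μ := by
    refine Integrable.mono' ((integrable_const (1:ℝ)).add hL2.integrable_sq)
      (hYmeas 0).aestronglyMeasurable ?_
    filter_upwards [hgt] with ω hω
    have hLpos : 0 < L 0 ω := Real.log_pos hω
    simpa [Pi.add_apply, abs_mul, hY_def, hL_def] using abs_mul_log_le (L 0 ω) hLpos
  -- positivity of the mean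
  have hm_pos : 0 < m := by
    have hLpos : ∀ᵐ ω ∂μ, 0 < L 0 ω := hgt.mono fun ω h => Real.log_pos h
    rw [hm_def, integral_pos_iff_support_of_nonneg_ae (hLpos.mono fun ω h => h.le) hLint]
    have hsupp : ∀ᵐ ω ∂μ, ω ∈ Function.support (L 0) := hLpos.mono fun ω h => h.ne'
    by_contra hc
    push_neg at hc
    have h0 : μ (Function.support (L 0)) = 0 := le_antisymm hc zero_le'
    have h1 : μ {ω | ¬ ω ∈ Function.support (L 0)} = 0 := ae_iff.1 hsupp
    have h2 : (Function.support (L 0))ᶜ = {ω | ¬ ω ∈ Function.support (L 0)} := rfl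
    have hle := measure_union_le (μ := μ) (Function.support (L 0)) (Function.support (L 0))ᶜ
    rw [Set.union_compl_self, h2] at hle
    simp only [h0, h1, add_zero, measure_univ] at hle
    simp at hle
  -- strong laws
  have hSLLN1 : ∀ᵐ ω ∂μ, Tendsto (fun n : ℕ => S n ω / n) atTop (𝓝 m) := by
    filter_upwards [strong_law_ae L hLint hpairL hidentL] with ω hω
    refine hω.congr fun n => ?_
    simp [hS_def, smul_eq_mul, div_eq_inv_mul]
  have hSLLN2 : ∀ᵐ ω ∂μ, Tendsto (fun n : ℕ => T n ω / n) atTop (𝓝 τ) := by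
    filter_upwards [strong_law_ae Y hYint hpairY hidentY] with ω hω
    refine hω.congr fun n => ?_
    simp [hT_def, smul_eq_mul, div_eq_inv_mul]
  -- a.e. convergences
  have haeB : ∀ᵐ ω ∂μ, Tendsto (fun n => B n ω) atTop (𝓝 (m * Real.log m - τ)) := by
    filter_upwards [hSLLN1, hSLLN2] with ω h1 h2
    have hc : ContinuousAt (fun x : ℝ => x * Real.log x) m :=
      continuousAt_id.mul (Real.continuousAt_log hm_pos.ne')
    exact (hc.tendsto.comp h1).sub h2
  have hlogTop : Tendsto (fun n : ℕ => Real.log n) atTop atTop :=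
    Real.tendsto_log_atTop.comp tendsto_natCast_atTop_atTop
  have haeD : ∀ᵐ ω ∂μ, Tendsto (fun n => D n ω) atTop (𝓝 0) := by
    filter_upwards [hSLLN1, haeB] with ω h1 hB'
    have h2 : Tendsto (fun n : ℕ => S n ω / n - m) atTop (𝓝 0) := by
      simpa using h1.sub (tendsto_const_nhds (x := m) (f := atTop (α := ℕ)))
    have h3 : Tendsto (fun n : ℕ => B n ω / Real.log n) atTop (𝓝 0) := by
      have := hB'.mul (hlogTop.inv_tendsto_atTop)
      simpa [div_eq_mul_inv] using this
    simpa using h2.add h3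
  have haePsi : ∀ᵐ ω ∂μ, Tendsto (fun n => psi (D n ω)) atTop (𝓝 1) := by
    filter_upwards [haeD] with ω hω
    exact psi_tendsto.comp hω
  -- Chebyshev part: A → 0 in measure
  have hSfun : ∀ n, S n = ∑ i ∈ Finset.range n, L i := by
    intro n; ext ω; simp [hS_def]
  have hSint : ∀ i, Integrable (L i) μ := fun i => (hidentL i).symm.integrable_snd hLint
  have hmeanS : ∀ n : ℕ, ∫ ω, S n ω ∂μ = n * m := by
    intro n
    simp only [hS_def]
    rw [integral_finset_sum _ (fun i _ => hSint i)]
    have hieq : ∀ i, ∫ ω, L i ω ∂μ = m := fun i => (hidentL i).integral_eq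
    simp [hieq, Finset.sum_const, Finset.card_range, nsmul_eq_mul]
  have hvarS : ∀ n : ℕ, variance (S n) μ = n * variance (L 0) μ := by
    intro n
    have h1 : variance (∑ i ∈ Finset.range n, L i) μ
        = ∑ i ∈ Finset.range n, variance (L i) μ :=
      IndepFun.variance_sum (fun i _ => hL2i i) (fun i _ j _ hij => hpairL hij)
    have h2 : ∀ i, variance (L i) μ = variance (L 0) μ := fun i => (hidentL i).variance_eq
    rw [hSfun n, h1]
    simp [h2, Finset.sum_const, Finset.card_range, nsmul_eq_mul]
  have hMS : ∀ n, MemLp (S n) 2 μ := by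
    intro n
    rw [hSfun n]
    exact memLp_finset_sum' _ (fun i _ => hL2i i)
  have hA : TendstoInMeasure μ A atTop (fun _ => 0) := by
    rw [tendstoInMeasure_iff_dist]
    intro ε hε
    have hε2 : (0:ℝ) < ε ^ 2 := by positivity
    have hub : Tendsto (fun n : ℕ =>
        ENNReal.ofReal (variance (L 0) μ / ε ^ 2 * (Real.log n ^ 2 / n))) atTop (𝓝 0) := by
      have h1 : Tendsto (fun x : ℝ => Real.log x ^ 2 / (1 * x + 0)) atTop (𝓝 0) :=
        Real.tendsto_pow_log_div_mul_add_atTop 1 0 2 one_ne_zero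
      have h2 : Tendsto (fun n : ℕ => Real.log n ^ 2 / n) atTop (𝓝 0) := by
        have := h1.comp tendsto_natCast_atTop_atTop
        simpa [Function.comp_def] using this
      have h3 : Tendsto (fun n : ℕ => variance (L 0) μ / ε ^ 2 * (Real.log n ^ 2 / n))
          atTop (𝓝 0) := by
        simpa using h2.const_mul (variance (L 0) μ / ε ^ 2)
      have := (ENNReal.continuous_ofReal.tendsto 0).comp h3
      simpa [Function.comp_def] using this
    refine tendsto_of_tendsto_of_tendsto_of_le_of_le' tendsto_const_nhds hub
      (Eventually.of_forall fun n => zero_le') ?_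
    filter_upwards [eventually_ge_atTop 2] with n hn
    have h1n : (1:ℝ) < n := by exact_mod_cast lt_of_lt_of_le one_lt_two hn
    have hn0 : (0:ℝ) < n := lt_trans one_pos h1n
    have hlogn : 0 < Real.log n := Real.log_pos h1n
    have hcpos : 0 < ε * n / Real.log n := by positivity
    have hseteq : {x | ε ≤ dist (A n x) 0}
        = {ω | ε * n / Real.log n ≤ |S n ω - (∫ ω', S n ω' ∂μ)|} := by
      ext x
      simp only [Set.mem_setOf_eq, Real.dist_eq, sub_zero, hmeanS n, hA_def]
      have hrw : S n x / n - m = (S n x - n * m) / n := by field_simp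
      rw [hrw, abs_mul, abs_of_pos hlogn, abs_div, abs_of_pos hn0]
      rw [div_le_iff₀ hlogn, ← mul_div_assoc, le_div_iff₀ hn0, mul_comm (Real.log n)]
    rw [hseteq]
    refine le_trans (meas_ge_le_variance_div_sq (hMS n) hcpos) ?_
    rw [hvarS n]
    apply ENNReal.ofReal_le_ofReal
    apply le_of_eq
    field_simp
  -- combination
  have hF1 : TendstoInMeasure μ (fun n ω => Real.exp m * (A n ω * psi (D n ω))) atTop
      (fun _ => Real.exp m * 0) :=
    tim_const_mul (tim_mul_zero hA
      (fun n => (psi_meas.comp (hDmeas n)).aestronglyMeasurable) haePsi)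
  have hF2 : TendstoInMeasure μ (fun n ω => Real.exp m * (B n ω * psi (D n ω))) atTop
      (fun _ => Real.exp m * ((m * Real.log m - τ) * 1)) := by
    refine tendstoInMeasure_of_tendsto_ae
      (fun n => (measurable_const.mul ((hBmeas n).mul (psi_meas.comp (hDmeas n)))).aestronglyMeasurable) ?_
    filter_upwards [haeB, haePsi] with ω h1 h2
    exact tendsto_const_nhds.mul (h1.mul h2)
  have hsum := tim_add hF1 hF2
  -- identify with the original expression, eventually a.e.
  refine tim_congr' ?_ (by
    convert hsum using 2
    ring)
  filter_upwards [eventually_ge_atTop 2] with n hn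
  filter_upwards [hG] with ω hω
  have h1n : (1:ℝ) < n := by exact_mod_cast lt_of_lt_of_le one_lt_two hn
  have hn0 : (0:ℝ) < n := lt_trans one_pos h1n
  have hlogn : 0 < Real.log n := Real.log_pos h1n
  have hxipos : ∀ i, 0 < ξ i ω := fun i => lt_trans one_pos (hω i)
  have hLpos : ∀ i, 0 < Real.log (ξ i ω) := fun i => Real.log_pos (hω i)
  have hSpos : 0 < S n ω := by
    simp only [hS_def, hL_def]
    refine Finset.sum_pos (fun i _ => hLpos i) ?_
    simp only [Finset.nonempty_range_iff]
    omega
  have hlogprod : Real.log (∏ j ∈ Finset.range n, ξ j ω) = S n ω := by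
    simp only [hS_def, hL_def]
    exact Real.log_prod (fun j _ => (hxipos j).ne')
  have hprod : (∏ i ∈ Finset.range n, (ξ i ω) ^
        (Real.log (Real.log (∏ j ∈ Finset.range n, ξ j ω) / Real.log (ξ i ω))))
      = Real.exp (S n ω * Real.log (S n ω) - T n ω) := by
    have hfac : ∀ i ∈ Finset.range n, (ξ i ω) ^
          (Real.log (Real.log (∏ j ∈ Finset.range n, ξ j ω) / Real.log (ξ i ω)))
        = Real.exp (Real.log (ξ i ω) * Real.log (S n ω)
            - Real.log (ξ i ω) * Real.log (Real.log (ξ i ω))) := by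
      intro i _
      rw [hlogprod, Real.rpow_def_of_pos (hxipos i), Real.log_div hSpos.ne' (hLpos i).ne']
      congr 1
      ring
    rw [Finset.prod_congr rfl hfac, ← Real.exp_sum]
    congr 1
    rw [Finset.sum_sub_distrib, ← Finset.sum_mul]
  have hE : (Real.exp (S n ω * Real.log (S n ω) - T n ω)) ^ (((n:ℝ) * Real.log n)⁻¹)
      = Real.exp ((S n ω * Real.log (S n ω) - T n ω) * ((n:ℝ) * Real.log n)⁻¹) := by
    rw [Real.rpow_def_of_pos (Real.exp_pos _), Real.log_exp]
  have hexp_eq : (S n ω * Real.log (S n ω) - T n ω) * ((n:ℝ) * Real.log n)⁻¹ = m + D n ω := by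
    have hlogSn : Real.log (S n ω / n) = Real.log (S n ω) - Real.log n :=
      Real.log_div hSpos.ne' hn0.ne'
    simp only [hD_def, hB_def, hlogSn]
    field_simp
    ring
  have hlogD : Real.log (n:ℝ) * D n ω = A n ω + B n ω := by
    simp only [hD_def, hA_def]
    field_simp
  have hkey := key_ident (Real.log (n:ℝ)) (D n ω)
  rw [hprod, hE, hexp_eq, Real.exp_add,
    show Real.log (n:ℝ) * (Real.exp m * Real.exp (D n ω) - Real.exp m)
      = Real.exp m * (Real.log (n:ℝ) * (Real.exp (D n ω) - 1)) from by ring,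
    hkey, hlogD]
  ring
end

section
/- For each n ≥ 2, the multiplicative Cauchy quotient mean 𝓟_n is a strict n-variable mean in (1,∞): for all x_1,…,x_n > 1 one has min(x_1,…,x_n) ≤ 𝓟_n(x_1,…,x_n) ≤ max(x_1,…,x_n), and both inequalities are strict whenever min(x_1,…,x_n) < max(x_1,…,x_n). -/
open Finset Real

/-- The `n`-variable multiplicative (power) Cauchy quotient mean. -/
noncomputable def multCauchyQuotientMean (n : ℕ) (x : Fin n → ℝ) : ℝ :=
  (∏ i, (x i) ^ (Real.log (Real.log (∏ j, x j) / Real.log (x i))))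
    ^ (((n : ℝ) * Real.log n)⁻¹)

lemma aux_one_sub_inv_le_log {t : ℝ} (ht : 0 < t) : 1 - t⁻¹ ≤ Real.log t := by
  have h := Real.log_le_sub_one_of_pos (show (0:ℝ) < t⁻¹ by positivity)
  rw [Real.log_inv] at h
  linarith

lemma aux_one_sub_inv_lt_log {t : ℝ} (ht : 0 < t) (ht1 : t ≠ 1) :
    1 - t⁻¹ < Real.log t := by
  have h := Real.log_lt_sub_one_of_pos (show (0:ℝ) < t⁻¹ by positivity)
    (by simpa using ht1)
  rw [Real.log_inv] at h
  linarith

/-- For each `n ≥ 2`, the multiplicative Cauchy quotient mean `𝓟ₙ` is a strict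
`n`-variable mean in `(1,∞)`. -/
theorem multCauchyQuotientMean_isStrictMean (n : ℕ) (hn : 2 ≤ n)
    (x : Fin n → ℝ) (hx : ∀ i, 1 < x i) :
    (⨅ i, x i) ≤ multCauchyQuotientMean n x ∧
    multCauchyQuotientMean n x ≤ (⨆ i, x i) ∧
    ((⨅ i, x i) < (⨆ i, x i) →
      (⨅ i, x i) < multCauchyQuotientMean n x ∧
        multCauchyQuotientMean n x < (⨆ i, x i)) := by
  have hne : Nonempty (Fin n) := ⟨⟨0, by omega⟩⟩
  have hnt : Nontrivial (Fin n) := Fin.nontrivial_iff_two_le.mpr hn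
  have hn1 : (1:ℝ) < n := by exact_mod_cast lt_of_lt_of_le one_lt_two (by exact_mod_cast hn)
  have hn0 : (0:ℝ) < n := lt_trans one_pos hn1
  have hlogn : 0 < Real.log n := Real.log_pos hn1
  have hnln : 0 < (n:ℝ) * Real.log n := by positivity
  have hxpos : ∀ i, 0 < x i := fun i => lt_trans one_pos (hx i)
  set y : Fin n → ℝ := fun i => Real.log (x i) with hy
  have hypos : ∀ i, 0 < y i := fun i => Real.log_pos (hx i)
  set S : ℝ := ∑ i, y i with hSdef
  have hlogprod : Real.log (∏ j, x j) = S := by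
    rw [Real.log_prod (fun j _ => (hxpos j).ne')]
  have hSpos : 0 < S := Finset.sum_pos (fun i _ => hypos i) Finset.univ_nonempty
  have hyltS : ∀ i, y i < S := by
    intro i
    obtain ⟨j, hj⟩ := exists_ne i
    exact Finset.single_lt_sum hj (Finset.mem_univ i) (Finset.mem_univ j)
      (hypos j) (fun k _ _ => (hypos k).le)
  -- min and max
  obtain ⟨i0, hi0⟩ := Finite.exists_min x
  obtain ⟨i1, hi1⟩ := Finite.exists_max x
  have hinf : (⨅ i, x i) = x i0 :=
    le_antisymm (ciInf_le (Finite.bddBelow_range x) i0) (le_ciInf hi0)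
  have hsup : (⨆ i, x i) = x i1 :=
    le_antisymm (ciSup_le hi1) (le_ciSup (Finite.bddAbove_range x) i1)
  have hy0 : ∀ i, y i0 ≤ y i := fun i => Real.log_le_log (hxpos i0) (hi0 i)
  have hy1 : ∀ i, y i ≤ y i1 := fun i => Real.log_le_log (hxpos i) (hi1 i)
  -- log of the mean
  set T : ℝ := ∑ i, Real.log (S / y i) * y i with hT
  have hprodpos : 0 < ∏ i, (x i) ^ (Real.log (Real.log (∏ j, x j) / Real.log (x i))) :=
    Finset.prod_pos (fun i _ => Real.rpow_pos_of_pos (hxpos i) _)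
  have hmeanpos : 0 < multCauchyQuotientMean n x := by
    unfold multCauchyQuotientMean
    exact Real.rpow_pos_of_pos hprodpos _
  have hlogmean : Real.log (multCauchyQuotientMean n x) = ((n : ℝ) * Real.log n)⁻¹ * T := by
    unfold multCauchyQuotientMean
    rw [Real.log_rpow hprodpos,
      Real.log_prod (fun i _ => (Real.rpow_pos_of_pos (hxpos i) _).ne')]
    simp_rw [Real.log_rpow (hxpos _), hlogprod]
    rfl
  -- per-term upper bound
  have hsplit : ∀ i, Real.log (S / y i) = Real.log n + Real.log (S / ((n:ℝ) * y i)) := by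
    intro i
    rw [← Real.log_mul hn0.ne' (div_pos hSpos (mul_pos hn0 (hypos i))).ne']
    congr 1
    rw [eq_comm, ← mul_div_assoc, mul_div_mul_left _ _ hn0.ne']
  have per_upper : ∀ i, Real.log (S / y i) * y i ≤ y i * Real.log n + (S / n - y i) := by
    intro i
    have h2 : Real.log (S / ((n:ℝ) * y i)) ≤ S / ((n:ℝ) * y i) - 1 :=
      Real.log_le_sub_one_of_pos (div_pos hSpos (mul_pos hn0 (hypos i)))
    have h3 := mul_le_mul_of_nonneg_left h2 (hypos i).le
    have h4 : y i * (S / ((n:ℝ) * y i) - 1) = S / n - y i := by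
      field_simp [(hypos i).ne', hn0.ne']
    rw [hsplit i]
    nlinarith [h3, h4]
  have hT_upper : T ≤ S * Real.log n := by
    calc T ≤ ∑ i, (y i * Real.log n + (S / n - y i)) :=
          Finset.sum_le_sum (fun i _ => per_upper i)
      _ = S * Real.log n := by
          rw [Finset.sum_add_distrib, Finset.sum_sub_distrib, ← Finset.sum_mul,
            Finset.sum_const, Finset.card_univ, Fintype.card_fin, nsmul_eq_mul, ← hSdef]
          field_simp
          ring
  have hS_le : S ≤ (n:ℝ) * y i1 := by
    calc S = ∑ i, y i := rfl
      _ ≤ ∑ _i : Fin n, y i1 := Finset.sum_le_sum (fun i _ => hy1 i)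
      _ = (n:ℝ) * y i1 := by
          rw [Finset.sum_const, Finset.card_univ, Fintype.card_fin, nsmul_eq_mul]
  -- per-term lower bound
  have logSy_nonneg : ∀ i, 0 ≤ Real.log (S / y i) := by
    intro i
    apply Real.log_nonneg
    rw [le_div_iff₀ (hypos i), one_mul]
    exact (hyltS i).le
  have logSy_lb : ∀ i, Real.log n + (1 - (n:ℝ) * y i / S) ≤ Real.log (S / y i) := by
    intro i
    have h2 : 1 - (S / ((n:ℝ) * y i))⁻¹ ≤ Real.log (S / ((n:ℝ) * y i)) :=
      aux_one_sub_inv_le_log (div_pos hSpos (mul_pos hn0 (hypos i)))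
    have h3 : (S / ((n:ℝ) * y i))⁻¹ = (n:ℝ) * y i / S := by
      rw [inv_div]
    rw [hsplit i]
    rw [h3] at h2
    linarith
  have per_lower : ∀ i, y i0 * (Real.log n + (1 - (n:ℝ) * y i / S)) ≤ Real.log (S / y i) * y i := by
    intro i
    calc y i0 * (Real.log n + (1 - (n:ℝ) * y i / S)) ≤ y i0 * Real.log (S / y i) :=
          mul_le_mul_of_nonneg_left (logSy_lb i) (hypos i0).le
      _ ≤ Real.log (S / y i) * y i := by
          rw [mul_comm (y i0)]
          exact mul_le_mul_of_nonneg_left (hy0 i) (logSy_nonneg i)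
  have hsum_lb : ∑ i, y i0 * (Real.log n + (1 - (n:ℝ) * y i / S)) = y i0 * ((n:ℝ) * Real.log n) := by
    rw [← Finset.mul_sum]
    congr 1
    have h5 : ∑ i, ((n:ℝ) * y i / S) = (n:ℝ) := by
      simp_rw [mul_div_assoc]
      rw [← Finset.mul_sum, ← Finset.sum_div, ← hSdef, div_self hSpos.ne', mul_one]
    rw [Finset.sum_add_distrib, Finset.sum_sub_distrib, h5, Finset.sum_const,
      Finset.sum_const, Finset.card_univ, Fintype.card_fin, nsmul_eq_mul, nsmul_eq_mul]
    ring
  have hT_lower : (n:ℝ) * Real.log n * y i0 ≤ T := by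
    calc (n:ℝ) * Real.log n * y i0 = ∑ i, y i0 * (Real.log n + (1 - (n:ℝ) * y i / S)) := by
          rw [hsum_lb]; ring
      _ ≤ T := Finset.sum_le_sum (fun i _ => per_lower i)
  -- conclusions, easy parts
  have hmean_eq : multCauchyQuotientMean n x = Real.exp (((n : ℝ) * Real.log n)⁻¹ * T) := by
    rw [← hlogmean, Real.exp_log hmeanpos]
  have hlow : x i0 ≤ multCauchyQuotientMean n x := by
    rw [hmean_eq, show x i0 = Real.exp (y i0) from (Real.exp_log (hxpos i0)).symm,
      Real.exp_le_exp]
    rw [le_inv_mul_iff₀ hnln]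
    linarith [hT_lower]
  have hhigh : multCauchyQuotientMean n x ≤ x i1 := by
    rw [hmean_eq, show x i1 = Real.exp (y i1) from (Real.exp_log (hxpos i1)).symm,
      Real.exp_le_exp]
    rw [inv_mul_le_iff₀ hnln]
    calc T ≤ S * Real.log n := hT_upper
      _ ≤ ((n:ℝ) * y i1) * Real.log n := by
          exact mul_le_mul_of_nonneg_right hS_le hlogn.le
      _ = (n:ℝ) * Real.log n * y i1 := by ring
  refine ⟨hinf ▸ hlow, hsup ▸ hhigh, ?_⟩
  intro hlt
  rw [hinf, hsup] at hlt
  have hylt : y i0 < y i1 := Real.log_lt_log (hxpos i0) hlt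
  -- strict upper
  have hS_lt : S < (n:ℝ) * y i1 := by
    have := Finset.sum_lt_sum (f := y) (g := fun _ => y i1)
      (fun i (_ : i ∈ Finset.univ) => hy1 i) ⟨i0, Finset.mem_univ i0, hylt⟩
    calc S = ∑ i, y i := rfl
      _ < ∑ _i : Fin n, y i1 := this
      _ = (n:ℝ) * y i1 := by
          rw [Finset.sum_const, Finset.card_univ, Fintype.card_fin, nsmul_eq_mul]
  have hT_ltU : T < (n:ℝ) * Real.log n * y i1 := by
    calc T ≤ S * Real.log n := hT_upper
      _ < ((n:ℝ) * y i1) * Real.log n := by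
          exact mul_lt_mul_of_pos_right hS_lt hlogn
      _ = (n:ℝ) * Real.log n * y i1 := by ring
  -- strict lower
  have hnm_lt : (n:ℝ) * y i0 < S := by
    have := Finset.sum_lt_sum (f := fun _ => y i0) (g := y)
      (fun i (_ : i ∈ Finset.univ) => hy0 i) ⟨i1, Finset.mem_univ i1, hylt⟩
    calc (n:ℝ) * y i0 = ∑ _i : Fin n, y i0 := by
          rw [Finset.sum_const, Finset.card_univ, Fintype.card_fin, nsmul_eq_mul]
      _ < ∑ i, y i := this
      _ = S := rfl
  have per_lower_strict : y i0 * (Real.log n + (1 - (n:ℝ) * y i0 / S)) < Real.log (S / y i0) * y i0 := by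
    have hne1 : S / ((n:ℝ) * y i0) ≠ 1 :=
      ((one_lt_div (mul_pos hn0 (hypos i0))).mpr hnm_lt).ne'
    have h2 : 1 - (S / ((n:ℝ) * y i0))⁻¹ < Real.log (S / ((n:ℝ) * y i0)) :=
      aux_one_sub_inv_lt_log (div_pos hSpos (mul_pos hn0 (hypos i0))) hne1
    have h3 : (S / ((n:ℝ) * y i0))⁻¹ = (n:ℝ) * y i0 / S := by rw [inv_div]
    rw [h3] at h2
    have h4 : Real.log n + (1 - (n:ℝ) * y i0 / S) < Real.log (S / y i0) := by
      rw [hsplit i0]; linarith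
    calc y i0 * (Real.log n + (1 - (n:ℝ) * y i0 / S)) < y i0 * Real.log (S / y i0) :=
          mul_lt_mul_of_pos_left h4 (hypos i0)
      _ = Real.log (S / y i0) * y i0 := mul_comm _ _
  have hT_ltL : (n:ℝ) * Real.log n * y i0 < T := by
    have := Finset.sum_lt_sum
      (f := fun i => y i0 * (Real.log n + (1 - (n:ℝ) * y i / S)))
      (g := fun i => Real.log (S / y i) * y i)
      (fun i (_ : i ∈ Finset.univ) => per_lower i) ⟨i0, Finset.mem_univ i0, per_lower_strict⟩
    calc (n:ℝ) * Real.log n * y i0 = ∑ i, y i0 * (Real.log n + (1 - (n:ℝ) * y i / S)) := by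
          rw [hsum_lb]; ring
      _ < T := this
  constructor
  · rw [hinf, hmean_eq, show x i0 = Real.exp (y i0) from (Real.exp_log (hxpos i0)).symm,
      Real.exp_lt_exp]
    rw [lt_inv_mul_iff₀ hnln]
    linarith
  · rw [hsup, hmean_eq, show x i1 = Real.exp (y i1) from (Real.exp_log (hxpos i1)).symm,
      Real.exp_lt_exp]
    rw [inv_mul_lt_iff₀ hnln]
    linarith
end

section
/- Let n ≥ 2 and let y_1,…,y_n > 0, and set S := y_1 + ⋯ + y_n. Then n · ln(n) · min(y_1,…,y_n) ≤ Σ_{i=1}^n y_i ln( S / y_i ) ≤ n · ln(n) · max(y_1,…,y_n). -/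
/-- For `n ≥ 2` and positive reals `y₁,…,yₙ` with sum `S`,
`n ln(n) min yᵢ ≤ Σᵢ yᵢ ln(S/yᵢ) ≤ n ln(n) max yᵢ`. -/
theorem entropy_sum_bounds (n : ℕ) (hn : 2 ≤ n) (y : Fin n → ℝ)
    (hy : ∀ i, 0 < y i) :
    (n : ℝ) * Real.log n * (⨅ i, y i) ≤
        ∑ i, y i * Real.log ((∑ j, y j) / y i) ∧
      ∑ i, y i * Real.log ((∑ j, y j) / y i) ≤
        (n : ℝ) * Real.log n * (⨆ i, y i) := by
  have hne : Nonempty (Fin n) := ⟨⟨0, by omega⟩⟩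
  set S : ℝ := ∑ j, y j with hSdef
  have hnpos : (0:ℝ) < n := by positivity
  have hS : 0 < S := Finset.sum_pos (fun i _ => hy i) Finset.univ_nonempty
  have hyS : ∀ i, y i ≤ S := fun i =>
    Finset.single_le_sum (fun j _ => (hy j).le) (Finset.mem_univ i)
  have hlogn : 0 ≤ Real.log n := Real.log_nonneg (by exact_mod_cast Nat.one_le_of_lt hn)
  have hlog_nonneg : ∀ i, 0 ≤ Real.log (S / y i) := fun i =>
    Real.log_nonneg ((one_le_div (hy i)).2 (hyS i))
  constructor
  · -- lower bound
    have hm_le : ∀ i, (⨅ j, y j) ≤ y i := fun i => ciInf_le (Finite.bddBelow_range y) i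
    have hm_nonneg : 0 ≤ ⨅ j, y j := le_ciInf fun i => (hy i).le
    -- AM-GM via Jensen: ∑ (1/n) log (y i) ≤ log (S/n)
    have jensen : (∑ i, (1 / (n:ℝ)) • Real.log (y i)) ≤
        Real.log (∑ i : Fin n, (1 / (n:ℝ)) • y i) := by
      apply strictConcaveOn_log_Ioi.concaveOn.le_map_sum
      · intro i _; positivity
      · simp [Finset.sum_const]
        field_simp
      · intro i _; exact hy i
    have hsum_smul : (∑ i : Fin n, (1 / (n:ℝ)) • y i) = S / n := by
      rw [← Finset.smul_sum]; simp [smul_eq_mul]; ring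
    have hlogs : (∑ i, Real.log (y i)) ≤ (n:ℝ) * Real.log S - (n:ℝ) * Real.log n := by
      rw [hsum_smul, Real.log_div hS.ne' hnpos.ne'] at jensen
      have := mul_le_mul_of_nonneg_left jensen hnpos.le
      rw [Finset.mul_sum] at this
      simp only [smul_eq_mul, ← mul_assoc] at this
      calc (∑ i, Real.log (y i)) = ∑ i, (n:ℝ) * (1/(n:ℝ)) * Real.log (y i) := by
            congr 1; funext i; field_simp
        _ ≤ (n:ℝ) * (Real.log S - Real.log n) := this
        _ = (n:ℝ) * Real.log S - (n:ℝ) * Real.log n := by ring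
    have key : (n:ℝ) * Real.log n ≤ ∑ i, Real.log (S / y i) := by
      have : (∑ i, Real.log (S / y i)) = (n:ℝ) * Real.log S - ∑ i, Real.log (y i) := by
        have hld : ∀ i : Fin n, Real.log (S / y i) = Real.log S - Real.log (y i) :=
          fun i => Real.log_div hS.ne' (hy i).ne'
        simp only [hld]
        rw [Finset.sum_sub_distrib]
        simp [Finset.sum_const, mul_comm]
      rw [this]; linarith
    calc (n:ℝ) * Real.log n * (⨅ i, y i)
        ≤ (∑ i, Real.log (S / y i)) * (⨅ i, y i) := by
          exact mul_le_mul_of_nonneg_right key hm_nonneg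
      _ = ∑ i, (⨅ j, y j) * Real.log (S / y i) := by
          rw [Finset.sum_mul]; congr 1; funext i; ring
      _ ≤ ∑ i, y i * Real.log (S / y i) := by
          apply Finset.sum_le_sum
          intro i _
          exact mul_le_mul_of_nonneg_right (hm_le i) (hlog_nonneg i)
  · -- upper bound
    have hM_le : ∀ i, y i ≤ ⨆ j, y j := fun i => le_ciSup (Finite.bddAbove_range y) i
    have jensen : (∑ i, (y i / S) • Real.log (S / y i)) ≤
        Real.log (∑ i : Fin n, (y i / S) • (S / y i)) := by
      apply strictConcaveOn_log_Ioi.concaveOn.le_map_sum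
      · intro i _; exact div_nonneg (hy i).le hS.le
      · rw [← Finset.sum_div]; field_simp; exact hSdef.symm
      · intro i _; exact div_pos hS (hy i)
    have hsum1 : (∑ i : Fin n, (y i / S) • (S / y i)) = (n:ℝ) := by
      have h1 : ∀ i ∈ Finset.univ, (y i / S) • (S / y i) = 1 := by
        intro i _
        rw [smul_eq_mul, div_mul_div_comm, mul_comm, div_self (mul_pos hS (hy i)).ne']
      rw [Finset.sum_congr rfl h1]
      simp
    rw [hsum1] at jensen
    have hmain : (∑ i, y i * Real.log (S / y i)) ≤ S * Real.log n := by
      have := mul_le_mul_of_nonneg_left jensen hS.le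
      rw [Finset.mul_sum] at this
      calc (∑ i, y i * Real.log (S / y i))
          = ∑ i, S * ((y i / S) • Real.log (S / y i)) := by
            congr 1; funext i; rw [smul_eq_mul]; field_simp
        _ ≤ S * Real.log n := this
    have hSM : S ≤ (n:ℝ) * ⨆ j, y j := by
      calc S = ∑ i, y i := rfl
        _ ≤ ∑ _i : Fin n, ⨆ j, y j := Finset.sum_le_sum (fun i _ => hM_le i)
        _ = (n:ℝ) * ⨆ j, y j := by simp [Finset.sum_const, mul_comm]
    calc (∑ i, y i * Real.log (S / y i)) ≤ S * Real.log n := hmain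
      _ ≤ ((n:ℝ) * ⨆ j, y j) * Real.log n := mul_le_mul_of_nonneg_right hSM hlogn
      _ = (n:ℝ) * Real.log n * (⨆ i, y i) := by ring
end

section
/- For each n ≥ 2, the logarithmic Cauchy quotient mean 𝓛_n is not a quasi arithmetic mean: there is no continuous, strictly monotone function f : (1,∞) → ℝ such that 𝓛_n(x_1,…,x_n) = f⁻¹( (1/n) Σ_{i=1}^n f(x_i) ) for all x_1,…,x_n > 1. -/
/-- The `n`-variable logarithmic Cauchy quotient mean. -/
noncomputable def logCauchyQuotientMean (n : ℕ) (x : Fin n → ℝ) : ℝ :=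
  (∑ i, (∏ j ∈ Finset.univ.erase i, x j) ^ (((n : ℝ) - 1)⁻¹) * Real.log (x i)) /
    (∑ i, Real.log (x i))

noncomputable def Phi (n : ℕ) (a c : ℝ) : ℝ :=
  (c * Real.log a + ((n:ℝ) - 1) * (a * c ^ (n - 2)) ^ (((n:ℝ) - 1)⁻¹) * Real.log c) /
    (Real.log a + ((n:ℝ) - 1) * Real.log c)
lemma lcqm_gt_one (n : ℕ) (hn : 2 ≤ n) (x : Fin n → ℝ) (hx : ∀ i, 1 < x i) :
    1 < logCauchyQuotientMean n x := by
  haveI : NeZero n := ⟨by omega⟩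
  have hne : (Finset.univ : Finset (Fin n)).Nonempty := Finset.univ_nonempty
  have hlog : ∀ i, 0 < Real.log (x i) := fun i => Real.log_pos (hx i)
  have hD : 0 < ∑ i, Real.log (x i) := Finset.sum_pos (fun i _ => hlog i) hne
  have hterm : ∀ i : Fin n, Real.log (x i) <
      (∏ j ∈ Finset.univ.erase i, x j) ^ (((n : ℝ) - 1)⁻¹) * Real.log (x i) := by
    intro i
    have hcard : (Finset.univ.erase i).card = n - 1 := by
      rw [Finset.card_erase_of_mem (Finset.mem_univ i), Finset.card_univ, Fintype.card_fin]
    have hne' : (Finset.univ.erase i).Nonempty := by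
      rw [← Finset.card_pos, hcard]; omega
    have hprod : 1 < ∏ j ∈ Finset.univ.erase i, x j := by
      have := Finset.prod_lt_prod_of_nonempty (f := fun _ : Fin n => (1:ℝ)) (g := x)
        (by intro j _; norm_num) (by intro j _; simpa using hx j) hne'
      simpa using this
    have h1n : (1:ℝ) < n := by exact_mod_cast (by omega : 1 < n)
    have hexp : (0:ℝ) < ((n : ℝ) - 1)⁻¹ := by
      have : (0:ℝ) < (n:ℝ) - 1 := by linarith
      positivity
    have : 1 < (∏ j ∈ Finset.univ.erase i, x j) ^ (((n : ℝ) - 1)⁻¹) :=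
      Real.one_lt_rpow_iff_of_pos (by linarith) |>.mpr (Or.inl ⟨hprod, hexp⟩)
    nlinarith [hlog i]
  have hND : (∑ i, Real.log (x i)) <
      ∑ i, (∏ j ∈ Finset.univ.erase i, x j) ^ (((n : ℝ) - 1)⁻¹) * Real.log (x i) :=
    Finset.sum_lt_sum_of_nonempty hne (fun i _ => hterm i)
  rw [logCauchyQuotientMean]
  rw [lt_div_iff₀ hD]
  linarith

lemma lcqm_pair (n : ℕ) (hn : 2 ≤ n) (a c : ℝ) (ha : 0 < a) (hc : 0 < c) :
    logCauchyQuotientMean n (fun i : Fin n => if (i : ℕ) = 0 then a else c) = Phi n a c := by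
  haveI : NeZero n := ⟨by omega⟩
  set x : Fin n → ℝ := fun i : Fin n => if (i : ℕ) = 0 then a else c with hxdef
  have hx0 : x 0 = a := by simp [hxdef]
  have hxne : ∀ i : Fin n, i ≠ 0 → x i = c := by
    intro i hi
    have : (i : ℕ) ≠ 0 := fun h => hi (Fin.ext (by simp [h]))
    simp [hxdef, this, hi]
  have hn1 : ((n:ℝ) - 1) ≠ 0 := by
    have : (1:ℝ) < n := by exact_mod_cast (by omega : 1 < n)
    linarith
  -- product over erase 0
  have hprod0 : ∏ j ∈ Finset.univ.erase (0 : Fin n), x j = c ^ (n - 1) := by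
    rw [Finset.prod_congr rfl (fun j hj => hxne j (Finset.mem_erase.1 hj).1),
      Finset.prod_const, Finset.card_erase_of_mem (Finset.mem_univ _),
      Finset.card_univ, Fintype.card_fin]
  have hc1 : (c ^ (n-1) : ℝ) ^ (((n:ℝ) - 1)⁻¹) = c := by
    rw [← Real.rpow_natCast c (n-1), ← Real.rpow_mul hc.le]
    have : ((n - 1 : ℕ) : ℝ) * ((n:ℝ) - 1)⁻¹ = 1 := by
      rw [Nat.cast_sub (by omega)]
      push_cast
      field_simp
    rw [this, Real.rpow_one]
  -- product over erase i for i ≠ 0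
  have hprodi : ∀ i : Fin n, i ≠ 0 →
      ∏ j ∈ Finset.univ.erase i, x j = a * c ^ (n - 2) := by
    intro i hi
    have h0mem : (0 : Fin n) ∈ Finset.univ.erase i :=
      Finset.mem_erase.2 ⟨Ne.symm hi, Finset.mem_univ _⟩
    rw [← Finset.mul_prod_erase _ x h0mem, hx0]
    congr 1
    rw [Finset.prod_congr rfl
        (fun j hj => hxne j (Finset.mem_erase.1 hj).1),
      Finset.prod_const, Finset.card_erase_of_mem h0mem,
      Finset.card_erase_of_mem (Finset.mem_univ _),
      Finset.card_univ, Fintype.card_fin, (by omega : n - 1 - 1 = n - 2)]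
  -- numerator
  have hnum : ∑ i : Fin n, (∏ j ∈ Finset.univ.erase i, x j) ^ (((n : ℝ) - 1)⁻¹)
      * Real.log (x i)
      = c * Real.log a + ((n:ℝ) - 1) * (a * c ^ (n - 2)) ^ (((n:ℝ) - 1)⁻¹) * Real.log c := by
    rw [← Finset.add_sum_erase _ _ (Finset.mem_univ (0 : Fin n))]
    rw [hprod0, hc1, hx0]
    congr 1
    rw [Finset.sum_congr rfl (fun i hi => by
      rw [hprodi i (Finset.mem_erase.1 hi).1, hxne i (Finset.mem_erase.1 hi).1]),
      Finset.sum_const, Finset.card_erase_of_mem (Finset.mem_univ _),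
      Finset.card_univ, Fintype.card_fin, nsmul_eq_mul, Nat.cast_sub (by omega : 1 ≤ n)]
    push_cast
    ring
  -- denominator
  have hden : ∑ i : Fin n, Real.log (x i) = Real.log a + ((n:ℝ) - 1) * Real.log c := by
    rw [← Finset.add_sum_erase _ _ (Finset.mem_univ (0 : Fin n))]
    rw [hx0]
    congr 1
    rw [Finset.sum_congr rfl (fun i hi => by rw [hxne i (Finset.mem_erase.1 hi).1]),
      Finset.sum_const, Finset.card_erase_of_mem (Finset.mem_univ _),
      Finset.card_univ, Fintype.card_fin, nsmul_eq_mul, Nat.cast_sub (by omega : 1 ≤ n)]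
    push_cast
    ring
  rw [logCauchyQuotientMean, hnum, hden, Phi]

lemma Phi_two (a c : ℝ) :
    Phi 2 a c = (c * Real.log a + a * Real.log c) / (Real.log a + Real.log c) := by
  rw [Phi]
  norm_num

lemma exp_quarter : (5/4 : ℝ) ≤ Real.exp (1/4) := by
  have := Real.add_one_le_exp (1/4 : ℝ)
  linarith

lemma exp_half : (151/100 : ℝ) ≤ Real.exp (1/2) := by
  have h : Real.exp (1/2) = Real.exp (1/4) * Real.exp (1/4) := by
    rw [← Real.exp_add]; norm_num
  nlinarith [exp_quarter, Real.exp_pos (1/4 : ℝ)]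

lemma exp_026 : Real.exp (13/50) ≤ 50/37 := by
  have h := Real.add_one_lt_exp (by norm_num : (-(13/50) : ℝ) ≠ 0)
  have h2 : Real.exp (-(13/50)) = (Real.exp (13/50))⁻¹ := Real.exp_neg _
  have hp := Real.exp_pos (13/50 : ℝ)
  rw [h2] at h
  have h3 : (37/50 : ℝ) < (Real.exp (13/50))⁻¹ := by linarith
  have h4 : Real.exp (13/50) * (37/50) < 1 := by
    have := (mul_lt_mul_of_pos_left h3 hp)
    rwa [mul_inv_cancel₀ hp.ne'] at this
  linarith

lemma exp_seven : (1000 : ℝ) ≤ Real.exp 7 := by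
  have h1 : (2.7 : ℝ) ≤ Real.exp 1 := by
    have := Real.exp_one_gt_d9
    linarith
  have h7 : Real.exp 7 = (Real.exp 1) ^ (7:ℕ) := by
    rw [← Real.exp_nat_mul]; norm_num
  rw [h7]
  calc (1000:ℝ) ≤ 2.7 ^ (7:ℕ) := by norm_num
    _ ≤ (Real.exp 1) ^ (7:ℕ) := by
        apply pow_le_pow_left₀ (by norm_num) h1

lemma key_growth : ∀ v : ℝ, 9 ≤ v → v * Real.exp (3/2) ≤ Real.exp v / 100 := by
  intro v hv
  have hsplit : Real.exp v = Real.exp (3/2) * Real.exp (v - 3/2) := by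
    rw [← Real.exp_add]; ring_nf
  have hsplit2 : Real.exp (v - 3/2) = Real.exp 7 * Real.exp (v - 17/2) := by
    rw [← Real.exp_add]; ring_nf
  have h1 : (v - 17/2) + 1 ≤ Real.exp (v - 17/2) := Real.add_one_le_exp _
  have h2 : (100:ℝ) * v ≤ Real.exp (v - 3/2) := by
    rw [hsplit2]
    have : (1000:ℝ) * (v - 15/2) ≤ Real.exp 7 * Real.exp (v - 17/2) := by
      have hpos : (0:ℝ) < Real.exp (v - 17/2) := Real.exp_pos _
      nlinarith [exp_seven]
    nlinarith
  have hE : (0:ℝ) < Real.exp (3/2) := Real.exp_pos _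
  rw [hsplit]
  nlinarith

lemma log_le_two_sqrt (x : ℝ) (hx : 0 ≤ x) :
    Real.log (1+x) ≤ 2 * Real.sqrt (1+x) := by
  have h1 : Real.log (Real.sqrt (1+x)) = Real.log (1+x) / 2 :=
    Real.log_sqrt (by linarith)
  have h2 : Real.log (Real.sqrt (1+x)) ≤ Real.sqrt (1+x) - 1 :=
    Real.log_le_sub_one_of_pos (Real.sqrt_pos.2 (by linarith))
  linarith [Real.sqrt_nonneg (1+x)]

lemma sqrt_le_quarter (b : ℝ) (hb : 17 ≤ b) : Real.sqrt (1+b) ≤ b/4 := by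
  have h := Real.sqrt_le_sqrt (show (1+b) ≤ (b/4)^2 by nlinarith)
  rwa [Real.sqrt_sq (by linarith)] at h

set_option maxHeartbeats 1000000 in
lemma caseTwo (F : ℝ → ℝ)
    (hcont : ContinuousOn F (Set.Ioi (1:ℝ)))
    (hmono : StrictMonoOn F (Set.Ioi (1:ℝ)))
    (hPhi : ∀ a c : ℝ, 1 < a → 1 < c → F (Phi 2 a c) = (F a + F c) / 2)
    (hPhiGt : ∀ a c : ℝ, 1 < a → 1 < c → 1 < Phi 2 a c) : False := by
  set g : ℝ → ℝ := fun u => F (Real.exp u) with hg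
  have hexp1 : ∀ u : ℝ, 0 < u → 1 < Real.exp u := fun u hu => Real.one_lt_exp_iff.2 hu
  have hgmono : ∀ u v : ℝ, 0 < u → 0 < v → u ≤ v → g u ≤ g v := by
    intro u v hu hv huv
    rcases eq_or_lt_of_le huv with h | h
    · rw [h]
    · exact le_of_lt (hmono (Set.mem_Ioi.2 (hexp1 u hu)) (Set.mem_Ioi.2 (hexp1 v hv))
        (Real.exp_lt_exp.2 h))
  set Q : ℝ → ℝ → ℝ := fun u v => (Real.exp v * u + Real.exp u * v) / (u + v) with hQ
  have hQPhi : ∀ u v : ℝ, 0 < u → 0 < v → Phi 2 (Real.exp u) (Real.exp v) = Q u v := by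
    intro u v hu hv
    rw [Phi_two, Real.log_exp, Real.log_exp, hQ]
  have hQgt : ∀ u v : ℝ, 0 < u → 0 < v → 1 < Q u v := by
    intro u v hu hv
    rw [← hQPhi u v hu hv]
    exact hPhiGt _ _ (hexp1 u hu) (hexp1 v hv)
  set N : ℝ → ℝ → ℝ := fun u v => Real.log (Q u v) with hN
  have hNpos : ∀ u v : ℝ, 0 < u → 0 < v → 0 < N u v :=
    fun u v hu hv => Real.log_pos (hQgt u v hu hv)
  have hgN : ∀ u v : ℝ, 0 < u → 0 < v → g (N u v) = (g u + g v) / 2 := by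
    intro u v hu hv
    have h1 : Real.exp (N u v) = Q u v := Real.exp_log (by linarith [hQgt u v hu hv])
    rw [hg]
    dsimp only
    rw [h1, ← hQPhi u v hu hv]
    exact hPhi _ _ (hexp1 u hu) (hexp1 v hv)
  set δ : ℝ := (g (3/2) - g 1) / 2 with hδdef
  have hδ : 0 < δ := by
    have := hmono (Set.mem_Ioi.2 (hexp1 1 one_pos)) (Set.mem_Ioi.2 (hexp1 (3/2) (by norm_num)))
      (Real.exp_lt_exp.2 (by norm_num))
    rw [hδdef]
    have h2 : g 1 < g (3/2) := this
    linarith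
  -- bounds on Q for v ≥ 9
  have hnum1 : ∀ v : ℝ, 9 ≤ v →
      Real.exp v ≤ Real.exp v * 1 + Real.exp 1 * v ∧
      Real.exp v * 1 + Real.exp 1 * v ≤ (101/100) * Real.exp v := by
    intro v hv
    have h1 : Real.exp 1 * v ≤ Real.exp (3/2) * v := by
      have := Real.exp_le_exp.2 (show (1:ℝ) ≤ 3/2 by norm_num)
      nlinarith
    have h2 := key_growth v hv
    constructor
    · nlinarith [Real.exp_pos 1]
    · nlinarith
  have hnum2 : ∀ v : ℝ, 9 ≤ v →
      (3/2) * Real.exp v ≤ Real.exp v * (3/2) + Real.exp (3/2) * v ∧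
      Real.exp v * (3/2) + Real.exp (3/2) * v ≤ (151/100) * Real.exp v := by
    intro v hv
    have h2 := key_growth v hv
    constructor
    · nlinarith [Real.exp_pos (3/2 : ℝ), hv]
    · nlinarith
  -- gap bounds
  have hgaplo : ∀ v : ℝ, 9 ≤ v → Real.exp (13/50) * Q 1 v ≤ Q (3/2) v := by
    intro v hv
    have h1 := hnum1 v hv
    have h2 := hnum2 v hv
    have hE := Real.exp_pos v
    rw [hQ]
    dsimp only
    rw [← mul_div_assoc, div_le_div_iff₀ (by linarith) (by linarith)]
    have hb : Real.exp (13/50) ≤ 50/37 := exp_026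
    have hq1 : Real.exp v * 1 + Real.exp 1 * v ≤ (101/100) * Real.exp v := h1.2
    have hq2 : (3/2) * Real.exp v ≤ Real.exp v * (3/2) + Real.exp (3/2) * v := h2.1
    have hp1 : 0 < Real.exp v * 1 + Real.exp 1 * v := by nlinarith [Real.exp_pos 1]
    -- exp(13/50) * num1 * (3/2 + v) ≤ num2 * (1 + v)
    calc Real.exp (13/50) * (Real.exp v * 1 + Real.exp 1 * v) * (3/2 + v)
        ≤ (50/37) * ((101/100) * Real.exp v) * (3/2 + v) := by
          apply mul_le_mul_of_nonneg_right _ (by linarith)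
          apply mul_le_mul hb hq1 (le_of_lt hp1) (by norm_num)
      _ ≤ ((3/2) * Real.exp v) * (1 + v) := by nlinarith
      _ ≤ (Real.exp v * (3/2) + Real.exp (3/2) * v) * (1 + v) := by nlinarith
  have hgaphi : ∀ v : ℝ, 9 ≤ v → Q (3/2) v ≤ Real.exp (1/2) * Q 1 v := by
    intro v hv
    have h1 := hnum1 v hv
    have h2 := hnum2 v hv
    have hE := Real.exp_pos v
    rw [hQ]
    dsimp only
    have hrw : Real.exp (1/2) * ((Real.exp v * 1 + Real.exp 1 * v) / (1 + v))
        = (Real.exp (1/2) * (Real.exp v * 1 + Real.exp 1 * v)) / (1 + v) := by ring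
    rw [hrw, div_le_div_iff₀ (by linarith) (by linarith)]
    have hb : (151/100 : ℝ) ≤ Real.exp (1/2) := exp_half
    calc (Real.exp v * (3/2) + Real.exp (3/2) * v) * (1 + v)
        ≤ ((151/100) * Real.exp v) * (1 + v) := by nlinarith [h2.2]
      _ ≤ ((151/100) * Real.exp v) * (3/2 + v) := by nlinarith
      _ ≤ (Real.exp (1/2) * (Real.exp v * 1 + Real.exp 1 * v)) * (3/2 + v) := by
          have : (151/100) * Real.exp v ≤ Real.exp (1/2) * (Real.exp v * 1 + Real.exp 1 * v) := by
            nlinarith [h1.1, Real.exp_pos (1/2 : ℝ)]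
          nlinarith
  have hNgap : ∀ v : ℝ, 9 ≤ v →
      N 1 v + 13/50 ≤ N (3/2) v ∧ N (3/2) v ≤ N 1 v + 1/2 := by
    intro v hv
    have hv0 : (0:ℝ) < v := by linarith
    have hq1 : 0 < Q 1 v := by linarith [hQgt 1 v one_pos hv0]
    have hq2 : 0 < Q (3/2) v := by linarith [hQgt (3/2) v (by norm_num) hv0]
    constructor
    · have := Real.log_le_log (by positivity) (hgaplo v hv)
      rwa [Real.log_mul (Real.exp_pos _).ne' hq1.ne', Real.log_exp, add_comm] at this
    · have := Real.log_le_log hq2 (hgaphi v hv)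
      rwa [Real.log_mul (Real.exp_pos _).ne' hq1.ne', Real.log_exp, add_comm] at this
  -- bounds on N 1 v
  have hNdef : ∀ u v : ℝ, N u v = Real.log (Q u v) := fun _ _ => rfl
  have hN1lo : ∀ v : ℝ, 9 ≤ v → v - Real.log (1+v) ≤ N 1 v := by
    intro v hv
    have h1 := (hnum1 v hv).1
    have hv1 : (0:ℝ) < 1 + v := by linarith
    have hE := Real.exp_pos v
    have hle : Real.exp v / (1+v) ≤ Q 1 v := by
      rw [hQ]; dsimp only
      gcongr
    have hlog := Real.log_le_log (by positivity) hle
    rwa [Real.log_div hE.ne' hv1.ne', Real.log_exp, ← hNdef] at hlog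
  have hN1hi : ∀ v : ℝ, 9 ≤ v → N 1 v ≤ v - Real.log (1+v) + 1/100 := by
    intro v hv
    have h1 := (hnum1 v hv).2
    have hv1 : (0:ℝ) < 1 + v := by linarith
    have hE := Real.exp_pos v
    have hv0 : (0:ℝ) < v := by linarith
    have hq1 : 0 < Q 1 v := by linarith [hQgt 1 v one_pos hv0]
    have hle : Q 1 v ≤ ((101/100) * Real.exp v) / (1+v) := by
      rw [hQ]; dsimp only
      gcongr
    have hlog := Real.log_le_log hq1 hle
    have h101 : Real.log (101/100 : ℝ) ≤ 1/100 := by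
      have := Real.log_le_sub_one_of_pos (show (0:ℝ) < 101/100 by norm_num)
      linarith
    rw [Real.log_div (by positivity) hv1.ne',
      Real.log_div (by positivity) hv1.ne',
      Real.log_mul (by norm_num) hE.ne', Real.log_exp] at hlog
    have hQeq : N 1 v = Real.log (Real.exp v * 1 + Real.exp 1 * v) - Real.log (1+v) := by
      rw [hNdef, hQ]
      dsimp only
      rw [Real.log_div (by positivity) hv1.ne']
    rw [← hQeq] at hlog
    linarith
  set W : ℝ := N 1 9 with hWdef
  have hW0 : 0 < W := hNpos 1 9 one_pos (by norm_num)
  -- surjectivity of v ↦ N 1 v on [W, ∞)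
  have hsurj : ∀ w : ℝ, W ≤ w → ∃ v : ℝ, 9 ≤ v ∧ N 1 v = w := by
    intro w hw
    set b : ℝ := max 17 (2*w + 17) with hbdef
    have hb17 : (17:ℝ) ≤ b := le_max_left _ _
    have hb9 : (9:ℝ) ≤ b := by linarith
    have hbw : 2*w ≤ b := by
      have := le_max_right (17:ℝ) (2*w+17); linarith
    have hcontN : ContinuousOn (fun v => N 1 v) (Set.Icc 9 b) := by
      intro v hv
      have hv0 : (0:ℝ) < v := by linarith [hv.1]
      apply ContinuousAt.continuousWithinAt
      have hQc : ContinuousAt (fun t => Q 1 t) v := by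
        simp only [hQ]
        apply ContinuousAt.div
        · fun_prop
        · fun_prop
        · intro h; linarith [hv.1, h]
      have hlogc : ContinuousAt Real.log (Q 1 v) :=
        Real.continuousAt_log (by linarith [hQgt 1 v one_pos hv0])
      simp only [hNdef]
      exact hlogc.comp hQc
    have hNb : w ≤ N 1 b := by
      have hlo := hN1lo b hb9
      have hlog2 := log_le_two_sqrt b (by linarith)
      have hsq := sqrt_le_quarter b hb17
      linarith
    have hmem : w ∈ Set.Icc ((fun v => N 1 v) 9) ((fun v => N 1 v) b) := ⟨hw, hNb⟩
    obtain ⟨v, hvmem, hveq⟩ := intermediate_value_Icc hb9 hcontN hmem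
    exact ⟨v, hvmem.1, hveq⟩
  -- step inequalities
  have hstep : ∀ w : ℝ, W ≤ w →
      (g w + δ ≤ g (w + 1/2)) ∧ (g (w + 13/50) ≤ g w + δ) := by
    intro w hw
    obtain ⟨v, hv9, hveq⟩ := hsurj w hw
    have hv0 : (0:ℝ) < v := by linarith
    have hgap := hNgap v hv9
    have e1 := hgN 1 v one_pos hv0
    have e2 := hgN (3/2) v (by norm_num) hv0
    have hδeq : g (N (3/2) v) = g (N 1 v) + δ := by
      rw [e1, e2, hδdef]; ring
    have hw0 : 0 < w := lt_of_lt_of_le hW0 hw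
    have hN32pos : 0 < N (3/2) v := hNpos (3/2) v (by norm_num) hv0
    constructor
    · have := hgmono (N (3/2) v) (w + 1/2) hN32pos (by linarith)
        (by rw [← hveq]; linarith [hgap.2])
      rw [hδeq, hveq] at this
      linarith
    · have := hgmono (w + 13/50) (N (3/2) v) (by linarith) hN32pos
        (by rw [← hveq]; linarith [hgap.1])
      rw [hδeq, hveq] at this
      linarith
  -- induction: linear growth bounds along the steps
  have hindlo : ∀ j : ℕ, g W + j * δ ≤ g (W + j * (1/2)) := by
    intro j
    induction j with
    | zero => simp
    | succ j ih =>
      have hj : W ≤ W + j * (1/2) := by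
        have : (0:ℝ) ≤ j * (1/2) := by positivity
        linarith
      have hs := (hstep _ hj).1
      have harg : W + j * (1/2) + 1/2 = W + (j+1 : ℕ) * (1/2) := by push_cast; ring
      rw [harg] at hs
      push_cast at hs ih ⊢
      linarith
  have hindhi : ∀ j : ℕ, g (W + j * (13/50)) ≤ g W + j * δ := by
    intro j
    induction j with
    | zero => simp
    | succ j ih =>
      have hj : W ≤ W + j * (13/50) := by
        have : (0:ℝ) ≤ j * (13/50) := by positivity
        linarith
      have hs := (hstep _ hj).2
      have harg : W + j * (13/50) + 13/50 = W + (j+1 : ℕ) * (13/50) := by push_cast; ring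
      rw [harg] at hs
      push_cast at hs ih ⊢
      linarith
  -- real-parameter linear bounds
  have hup : ∀ t : ℝ, 0 ≤ t → g (W + t) ≤ g W + (t * (50/13) + 1) * δ := by
    intro t ht
    set j := ⌈t * (50/13)⌉₊ with hjdef
    have h1 : t * (50/13) ≤ (j:ℝ) := Nat.le_ceil _
    have h2 : (j:ℝ) < t * (50/13) + 1 := Nat.ceil_lt_add_one (by positivity)
    have h3 : t ≤ (j:ℝ) * (13/50) := by linarith
    have hjpos : (0:ℝ) ≤ (j:ℝ) * (13/50) := by positivity
    calc g (W + t) ≤ g (W + (j:ℝ) * (13/50)) :=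
          hgmono _ _ (by linarith) (by linarith) (by linarith)
      _ ≤ g W + (j:ℝ) * δ := hindhi j
      _ ≤ g W + (t * (50/13) + 1) * δ := by nlinarith [hδ]
  have hlo2 : ∀ t : ℝ, 0 ≤ t → g W + (2*t - 1) * δ ≤ g (W + t) := by
    intro t ht
    set j := ⌊2*t⌋₊ with hjdef
    have h1 : (j:ℝ) ≤ 2*t := Nat.floor_le (by positivity)
    have h2 : 2*t < (j:ℝ) + 1 := Nat.lt_floor_add_one _
    calc g W + (2*t - 1) * δ ≤ g W + (j:ℝ) * δ := by nlinarith [hδ]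
      _ ≤ g (W + (j:ℝ) * (1/2)) := hindlo j
      _ ≤ g (W + t) := hgmono _ _ (by positivity) (by linarith) (by linarith)
  -- the final contradiction
  set v : ℝ := max (max 10817 (2*W + 17)) (13*(g 1 - g W)/δ + (2*W + 40)) with hvdef
  have hva : (10817:ℝ) ≤ v := le_trans (le_max_left _ _) (le_max_left _ _)
  have hvb : 2*W + 17 ≤ v := le_trans (le_max_right _ _) (le_max_left _ _)
  have hvc : 13*(g 1 - g W)/δ + (2*W + 40) ≤ v := le_max_right _ _
  have hv9 : (9:ℝ) ≤ v := by linarith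
  have hv0 : (0:ℝ) < v := by linarith
  have hsqv : 8 * Real.sqrt (1+v) ≤ v/13 := by
    have h := Real.sqrt_le_sqrt (show 1+v ≤ (v/104)^2 by nlinarith)
    rw [Real.sqrt_sq (by linarith)] at h
    linarith
  have hlogv : Real.log (1+v) ≤ 2 * Real.sqrt (1+v) := log_le_two_sqrt v (by linarith)
  have hNv_lo : v - Real.log (1+v) ≤ N 1 v := hN1lo v hv9
  have hNvW : W ≤ N 1 v := by linarith
  have hEqn : g (N 1 v) = (g 1 + g v) / 2 := hgN 1 v one_pos hv0
  have hL : g W + (2*(N 1 v - W) - 1) * δ ≤ g (N 1 v) := by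
    have := hlo2 (N 1 v - W) (by linarith)
    rwa [show W + (N 1 v - W) = N 1 v by ring] at this
  have hR : g v ≤ g W + ((v - W) * (50/13) + 1) * δ := by
    have := hup (v - W) (by linarith)
    rwa [show W + (v - W) = v by ring] at this
  have s1 : (2*(v - v/52 - W) - 1) * δ ≤ (2*(N 1 v - W) - 1) * δ := by
    apply mul_le_mul_of_nonneg_right _ hδ.le
    linarith
  have s3 : 2*(g W) + (4*(v - v/52 - W) - 2) * δ
      ≤ g 1 + g W + ((v - W) * (50/13) + 1) * δ := by
    nlinarith [s1, hL, hR, hEqn]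
  have s4 : δ * (13*(g 1 - g W)/δ + (2*W + 40)) ≤ δ * v :=
    mul_le_mul_of_nonneg_left hvc hδ.le
  have s5 : δ * (13*(g 1 - g W)/δ + (2*W + 40)) = 13*(g 1 - g W) + δ*(2*W + 40) := by
    field_simp
  nlinarith [s3, s4, s5, hδ, hW0]

lemma not_QA (n : ℕ) (hn : 2 ≤ n) (F : ℝ → ℝ)
    (hcont : ContinuousOn F (Set.Ioi (1:ℝ)))
    (hmono : StrictMonoOn F (Set.Ioi (1:ℝ)))
    (hstar : ∀ x : Fin n → ℝ, (∀ i, 1 < x i) →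
      F (logCauchyQuotientMean n x) = (∑ i, F (x i)) / n) : False := by
  haveI : NeZero n := ⟨by omega⟩
  have h1n : (1:ℝ) < (n:ℝ) := by exact_mod_cast (by omega : 1 < n)
  have hn0 : (n:ℝ) ≠ 0 := by positivity
  have hsum_pair : ∀ g : ℝ → ℝ, ∀ u v : ℝ,
      ∑ i : Fin n, g (if (i:ℕ) = 0 then u else v) = g u + ((n:ℝ) - 1) * g v := by
    intro g u v
    rw [← Finset.add_sum_erase _ _ (Finset.mem_univ (0 : Fin n))]
    simp only [Fin.val_zero, if_pos rfl]
    congr 1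
    rw [Finset.sum_congr rfl (fun i hi => by
        have hi0 : (i:ℕ) ≠ 0 := by
          have := (Finset.mem_erase.1 hi).1
          exact fun h => this (Fin.ext (by simp [h]))
        rw [if_neg hi0]),
      Finset.sum_const, Finset.card_erase_of_mem (Finset.mem_univ _),
      Finset.card_univ, Fintype.card_fin, nsmul_eq_mul, Nat.cast_sub (by omega : 1 ≤ n)]
    push_cast
    ring
  have hPhi : ∀ a c : ℝ, 1 < a → 1 < c →
      F (Phi n a c) = (F a + ((n:ℝ) - 1) * F c) / n := by
    intro a c ha hc
    have hx : ∀ i : Fin n, 1 < (fun i : Fin n => if (i:ℕ) = 0 then a else c) i := by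
      intro i; by_cases h : (i:ℕ) = 0 <;> simp [h] <;> assumption
    have := hstar _ hx
    rw [lcqm_pair n hn a c (by linarith) (by linarith)] at this
    rw [this]
    congr 1
    have : ∀ i : Fin n, F (if (i:ℕ) = 0 then a else c)
        = (if (i:ℕ) = 0 then F a else F c) := by
      intro i; split <;> rfl
    rw [Finset.sum_congr rfl (fun i _ => this i), hsum_pair (fun t => t) (F a) (F c)]
  have hPhiGt : ∀ a c : ℝ, 1 < a → 1 < c → 1 < Phi n a c := by
    intro a c ha hc
    rw [← lcqm_pair n hn a c (by linarith) (by linarith)]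
    exact lcqm_gt_one n hn _ (fun i => by by_cases h : (i:ℕ) = 0 <;> simp [h] <;> assumption)
  rcases eq_or_lt_of_le hn with h2 | h3
  · subst h2
    exact caseTwo F hcont hmono (fun a c ha hc => by
      have := hPhi a c ha hc; norm_num at this ⊢; linarith) hPhiGt
  -- now 3 ≤ n
  have hlog2 : (0:ℝ) < Real.log 2 := Real.log_pos (by norm_num)
  set γ : ℝ := ((2:ℝ) ^ (n - 2 : ℕ)) ^ (((n:ℝ) - 1)⁻¹) with hγ
  have hγ1 : 1 < γ := by
    rw [hγ]
    apply (Real.one_lt_rpow_iff_of_pos (by positivity)).2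
    refine Or.inl ⟨one_lt_pow₀ (by norm_num) (by omega), by rw [inv_pos]; linarith⟩
  -- limit of (fun a => Phi n a 2) at 1⁺ is γ
  have hlim1 : Filter.Tendsto (fun a => Phi n a 2) (nhdsWithin 1 (Set.Ioi 1)) (nhds γ) := by
    have hca : ContinuousAt (fun a : ℝ => Phi n a 2) 1 := by
      have h1 : ContinuousAt (fun a : ℝ => Real.log a) 1 := Real.continuousAt_log one_ne_zero
      have h2 : ContinuousAt (fun a : ℝ => (a * 2 ^ (n-2 : ℕ)) ^ (((n:ℝ) - 1)⁻¹)) 1 := by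
        apply ContinuousAt.rpow_const
        · exact continuousAt_id.mul continuousAt_const
        · left; positivity
      apply ContinuousAt.div
      · exact (continuousAt_const.mul h1).add ((continuousAt_const.mul h2).mul continuousAt_const)
      · exact h1.add (continuousAt_const.mul continuousAt_const)
      · simp only [Real.log_one, zero_add]
        exact mul_ne_zero (by linarith) hlog2.ne'
    have hval : Phi n 1 2 = γ := by
      rw [Phi, Real.log_one]
      rw [one_mul]
      have hd : ((n:ℝ)-1) * Real.log 2 ≠ 0 := mul_ne_zero (by linarith) hlog2.ne'
      rw [div_eq_iff (by rw [zero_add]; exact hd), hγ]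
      ring
    have := hca.tendsto.mono_left (nhdsWithin_le_nhds (s := Set.Ioi 1))
    rwa [hval] at this
  -- F has a finite limit F₁ at 1⁺
  set F₁ : ℝ := (n:ℝ) * F γ - ((n:ℝ) - 1) * F 2 with hF₁def
  have hmaps : ∀ a ∈ Set.Ioi (1:ℝ), Phi n a 2 ∈ Set.Ioi (1:ℝ) :=
    fun a ha => hPhiGt a 2 ha (by norm_num)
  have hlim1' : Filter.Tendsto (fun a => Phi n a 2) (nhdsWithin 1 (Set.Ioi 1))
      (nhdsWithin γ (Set.Ioi 1)) := by
    rw [tendsto_nhdsWithin_iff]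
    exact ⟨hlim1, Filter.eventually_iff_exists_mem.2
      ⟨Set.Ioi 1, self_mem_nhdsWithin, hmaps⟩⟩
  have hFcomp : Filter.Tendsto (fun a => F (Phi n a 2)) (nhdsWithin 1 (Set.Ioi 1))
      (nhds (F γ)) := (hcont γ hγ1).tendsto.comp hlim1'
  have hF1 : Filter.Tendsto F (nhdsWithin 1 (Set.Ioi 1)) (nhds F₁) := by
    have heq : ∀ a ∈ Set.Ioi (1:ℝ), F a = (n:ℝ) * F (Phi n a 2) - ((n:ℝ) - 1) * F 2 := by
      intro a ha
      have := hPhi a 2 ha (by norm_num)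
      field_simp at this
      linarith
    have : Filter.Tendsto (fun a => (n:ℝ) * F (Phi n a 2) - ((n:ℝ) - 1) * F 2)
        (nhdsWithin 1 (Set.Ioi 1)) (nhds F₁) := by
      rw [hF₁def]
      exact (hFcomp.const_mul _).sub tendsto_const_nhds
    apply this.congr'
    filter_upwards [self_mem_nhdsWithin] with a ha
    exact (heq a ha).symm
  -- second limit: for c > 1, F c = F₁
  have hFc : ∀ c : ℝ, 1 < c → F c = F₁ := by
    intro c hc
    have hlim2 : Filter.Tendsto (fun b => Phi n c b) (nhdsWithin 1 (Set.Ioi 1))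
        (nhds 1) := by
      have hca : ContinuousAt (fun b : ℝ => Phi n c b) 1 := by
        have h1 : ContinuousAt (fun b : ℝ => Real.log b) 1 := Real.continuousAt_log one_ne_zero
        have h2 : ContinuousAt (fun b : ℝ => (c * b ^ (n-2 : ℕ)) ^ (((n:ℝ) - 1)⁻¹)) 1 := by
          apply ContinuousAt.rpow_const
          · exact continuousAt_const.mul (continuousAt_pow _ _)
          · left; positivity
        apply ContinuousAt.div
        · exact (continuousAt_id.mul continuousAt_const).add
            ((continuousAt_const.mul h2).mul h1)
        · exact continuousAt_const.add (continuousAt_const.mul h1)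
        · simp only [Real.log_one, mul_zero, add_zero]
          exact (Real.log_pos hc).ne'
      have hval : Phi n c 1 = 1 := by
        rw [Phi, Real.log_one]
        have : Real.log c ≠ 0 := (Real.log_pos hc).ne'
        simp [this]
      have := hca.tendsto.mono_left (nhdsWithin_le_nhds (s := Set.Ioi 1))
      rwa [hval] at this
    have hlim2' : Filter.Tendsto (fun b => Phi n c b) (nhdsWithin 1 (Set.Ioi 1))
        (nhdsWithin 1 (Set.Ioi 1)) := by
      rw [tendsto_nhdsWithin_iff]
      exact ⟨hlim2, Filter.eventually_iff_exists_mem.2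
        ⟨Set.Ioi 1, self_mem_nhdsWithin, fun b hb => hPhiGt c b hc hb⟩⟩
    have hL : Filter.Tendsto (fun b => F (Phi n c b)) (nhdsWithin 1 (Set.Ioi 1))
        (nhds F₁) := hF1.comp hlim2'
    have hR : Filter.Tendsto (fun b => (F c + ((n:ℝ) - 1) * F b) / n) (nhdsWithin 1 (Set.Ioi 1))
        (nhds ((F c + ((n:ℝ) - 1) * F₁) / n)) := by
      exact ((tendsto_const_nhds.add (hF1.const_mul _)).div_const _)
    have hLR : (fun b => F (Phi n c b)) =ᶠ[nhdsWithin 1 (Set.Ioi 1)]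
        (fun b => (F c + ((n:ℝ) - 1) * F b) / n) := by
      filter_upwards [self_mem_nhdsWithin] with b hb
      rw [hPhi c b hc hb]
    have := tendsto_nhds_unique (hL.congr' hLR) hR
    -- F₁ = (F c + K F₁)/n
    field_simp at this
    linarith
  have h2 := hFc 2 (by norm_num)
  have h3' := hFc 3 (by norm_num)
  have := hmono (Set.mem_Ioi.2 (by norm_num : (1:ℝ) < 2))
    (Set.mem_Ioi.2 (by norm_num : (1:ℝ) < 3)) (by norm_num)
  rw [h2, h3'] at this
  exact lt_irrefl _ this

/-- For each `n ≥ 2`, the logarithmic Cauchy quotient mean `𝓛ₙ` is not a quasi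
arithmetic mean on `(1,∞)`. -/
theorem logCauchyQuotientMean_not_quasiArithmetic (n : ℕ) (hn : 2 ≤ n) :
    ¬ ∃ f : ℝ → ℝ, ContinuousOn f (Set.Ioi (1 : ℝ)) ∧
      (StrictMonoOn f (Set.Ioi (1 : ℝ)) ∨ StrictAntiOn f (Set.Ioi (1 : ℝ))) ∧
      ∀ x : Fin n → ℝ, (∀ i, 1 < x i) →
        logCauchyQuotientMean n x =
          Function.invFunOn f (Set.Ioi (1 : ℝ)) ((∑ i, f (x i)) / n) := by
  rintro ⟨f, hc, hm, heq⟩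
  haveI : NeZero n := ⟨by omega⟩
  -- star property for f
  have hstar : ∀ x : Fin n → ℝ, (∀ i, 1 < x i) →
      f (logCauchyQuotientMean n x) = (∑ i, f (x i)) / n := by
    intro x hx
    set A := (∑ i, f (x i)) / n with hA
    have hne : (Finset.univ : Finset (Fin n)).Nonempty := Finset.univ_nonempty
    have hnpos : (0:ℝ) < n := by positivity
    have hsum : ∑ _i : Fin n, A = ∑ i, f (x i) := by
      rw [Finset.sum_const, Finset.card_univ, Fintype.card_fin, hA, nsmul_eq_mul]
      field_simp
    have himg : A ∈ f '' Set.Ioi (1:ℝ) := by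
      obtain ⟨i, -, hi⟩ := Finset.exists_le_of_sum_le hne (le_of_eq hsum)
      obtain ⟨j, -, hj⟩ := Finset.exists_le_of_sum_le hne (ge_of_eq hsum)
      have hconn : (f '' Set.Ioi (1:ℝ)).OrdConnected :=
        ((isPreconnected_Ioi).image f hc).ordConnected
      exact hconn.out ⟨x j, hx j, rfl⟩ ⟨x i, hx i, rfl⟩ ⟨hj, hi⟩
    obtain ⟨b, hb, hfb⟩ := himg
    have := heq x hx
    rw [this, ← hfb, Function.invFunOn_eq ⟨b, hb, hfb⟩, hfb]
  rcases hm with hm | hm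
  · exact not_QA n hn f hc hm hstar
  · refine not_QA n hn (fun t => -f t) hc.neg ?_ ?_
    · intro a ha b hb hab
      simpa using neg_lt_neg (hm ha hb hab)
    · intro x hx
      have := hstar x hx
      simp only [Finset.sum_neg_distrib, this]
      ring
end

section
/- Let n ≥ 2 and define F : (1,∞) × (1,∞) → ℝ by F(x,y) := ( x^{1/(n−1)} ln(y) + y^{1/(n−1)} ln(x) ) / ln(xy). Then F is not bisymmetric: there exist x, y, s, t > 1 such that F(F(x,y), F(s,t)) ≠ F(F(x,s), F(y,t)). -/
/-- The two-variable function `F(x,y) = (x^{1/(n−1)} ln y + y^{1/(n−1)} ln x)/ln(xy)`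
arising from the logarithmic Cauchy quotient mean. -/
noncomputable def F14 (n : ℕ) (x y : ℝ) : ℝ :=
  (x ^ (((n : ℝ) - 1)⁻¹) * Real.log y + y ^ (((n : ℝ) - 1)⁻¹) * Real.log x) /
    Real.log (x * y)

private lemma F14_two (x y : ℝ) (hx : 0 < x) (hy : 0 < y) :
    F14 2 x y = (x * Real.log y + y * Real.log x) / Real.log (x * y) := by
  have : (((2 : ℕ) : ℝ) - 1)⁻¹ = 1 := by norm_num
  rw [F14, this, Real.rpow_one, Real.rpow_one]

private lemma log2_pos : (0 : ℝ) < Real.log 2 := Real.log_pos (by norm_num)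

/-- The `n = 2` case: exact rational witness `x = y = 2, s = 4, t = 16`. -/
private lemma case_two :
    ∃ x y s t : ℝ, 1 < x ∧ 1 < y ∧ 1 < s ∧ 1 < t ∧
      F14 2 (F14 2 x y) (F14 2 s t) ≠ F14 2 (F14 2 x s) (F14 2 y t) := by
  have l2 := log2_pos
  have h22 : F14 2 2 2 = 2 := by
    rw [F14_two 2 2 (by norm_num) (by norm_num)]
    rw [show ((2:ℝ) * 2) = 2^2 by norm_num, Real.log_pow]
    push_cast; field_simp; ring
  have h416 : F14 2 4 16 = 8 := by
    rw [F14_two 4 16 (by norm_num) (by norm_num)]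
    rw [show ((4:ℝ) * 16) = 2^6 by norm_num, show (4:ℝ) = 2^2 by norm_num,
      show (16:ℝ) = 2^4 by norm_num, Real.log_pow, Real.log_pow, Real.log_pow]
    push_cast; field_simp; ring
  have h28 : F14 2 2 8 = 7/2 := by
    rw [F14_two 2 8 (by norm_num) (by norm_num)]
    rw [show ((2:ℝ) * 8) = 2^4 by norm_num, show (8:ℝ) = 2^3 by norm_num,
      show (2:ℝ) * Real.log (2^3) = 2 * Real.log (2^3) by rfl,
      Real.log_pow, Real.log_pow]
    push_cast; rw [div_eq_iff (by positivity)]; ring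
  have h24 : F14 2 2 4 = 8/3 := by
    rw [F14_two 2 4 (by norm_num) (by norm_num)]
    rw [show ((2:ℝ) * 4) = 2^3 by norm_num, show (4:ℝ) = 2^2 by norm_num,
      Real.log_pow, Real.log_pow]
    push_cast; rw [div_eq_iff (by positivity)]; ring
  have h216 : F14 2 2 16 = 24/5 := by
    rw [F14_two 2 16 (by norm_num) (by norm_num)]
    rw [show ((2:ℝ) * 16) = 2^5 by norm_num, show (16:ℝ) = 2^4 by norm_num,
      Real.log_pow, Real.log_pow]
    push_cast; rw [div_eq_iff (by positivity)]; ring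
  refine ⟨2, 2, 4, 16, by norm_num, by norm_num, by norm_num, by norm_num, ?_⟩
  rw [h22, h416, h24, h216, h28]
  -- Now show (7:ℝ)/2 ≠ F14 2 (8/3) (24/5)
  have hl1 : (0:ℝ) < Real.log (8/3) := Real.log_pos (by norm_num)
  have hl2 : (0:ℝ) < Real.log (24/5) := Real.log_pos (by norm_num)
  have key : 39 * Real.log (8/3) < 25 * Real.log (24/5) := by
    have h := Real.log_lt_log (x := ((8:ℝ)/3)^(39:ℕ)) (by positivity)
      (show ((8:ℝ)/3)^(39:ℕ) < ((24:ℝ)/5)^(25:ℕ) by norm_num)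
    rwa [Real.log_pow, Real.log_pow] at h
    -- casts
  have hne : F14 2 (8/3) (24/5) < 7/2 := by
    rw [F14_two (8/3) (24/5) (by norm_num) (by norm_num),
      Real.log_mul (by norm_num) (by norm_num)]
    rw [div_lt_iff₀ (by positivity)]
    nlinarith [key, hl1, hl2]
  exact fun h => absurd h.symm (ne_of_lt hne)

/-- The `n ≥ 3` case via strict concavity of `x ↦ x^p`, `p = 1/(n-1) ∈ (0,1)`. -/
private lemma case_ge_three (n : ℕ) (hn : 3 ≤ n) :
    ∃ x y s t : ℝ, 1 < x ∧ 1 < y ∧ 1 < s ∧ 1 < t ∧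
      F14 n (F14 n x y) (F14 n s t) ≠ F14 n (F14 n x s) (F14 n y t) := by
  set m : ℕ := n - 1 with hm
  have hm2 : 2 ≤ m := by omega
  have hmcast : ((n : ℝ) - 1) = (m : ℝ) := by
    have h1 : m + 1 = n := by omega
    have := congrArg (fun k : ℕ => (k : ℝ)) h1
    push_cast at this
    linarith
  have hmpos : (0:ℝ) < (m:ℝ) := by
    have : (2:ℝ) ≤ (m:ℝ) := by exact_mod_cast hm2
    linarith
  have he_pos : 0 < ((n : ℝ) - 1)⁻¹ := by rw [hmcast]; positivity
  have he_lt : ((n : ℝ) - 1)⁻¹ < 1 := by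
    rw [hmcast]
    have h1 : (1:ℝ) < (m:ℝ) := by
      have : (2:ℝ) ≤ (m:ℝ) := by exact_mod_cast hm2
      linarith
    rw [inv_lt_one_iff₀]; right; exact h1
  -- key rpow computation
  have hpow : ∀ a : ℝ, 0 < a → ((a ^ m) ^ (((n : ℝ) - 1)⁻¹) : ℝ) = a := by
    intro a ha
    rw [hmcast, ← Real.rpow_natCast a m, ← Real.rpow_mul ha.le,
      mul_inv_cancel₀ (ne_of_gt hmpos), Real.rpow_one]
  -- F14 n X X = X ^ e for X > 1
  have hFXX : ∀ X : ℝ, 1 < X → F14 n X X = X ^ (((n : ℝ) - 1)⁻¹) := by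
    intro X hX
    have hlog : 0 < Real.log X := Real.log_pos hX
    rw [F14, Real.log_mul (by linarith) (by linarith)]
    field_simp
  -- F14 at a^m, a^m
  have hFaa : ∀ a : ℝ, 1 < a → F14 n (a ^ m) (a ^ m) = a := by
    intro a ha
    have hX : (1:ℝ) < a ^ m := one_lt_pow₀ ha (by omega)
    rw [hFXX _ hX, hpow a (by linarith)]
  set l2 : ℝ := Real.log 2 with hl2def
  set l3 : ℝ := Real.log 3 with hl3def
  have hl2 : 0 < l2 := Real.log_pos (by norm_num)
  have hl3 : 0 < l3 := Real.log_pos (by norm_num)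
  set W : ℝ := (2 * l3 + 3 * l2) / (l2 + l3) with hW
  have hW1 : 1 < W := by
    rw [hW, lt_div_iff₀ (by positivity)]
    nlinarith
  -- mixed value
  have hFu : F14 n ((2:ℝ) ^ m) ((3:ℝ) ^ m) = W := by
    rw [F14, hpow 2 (by norm_num), hpow 3 (by norm_num),
      Real.log_mul (by positivity) (by positivity), Real.log_pow, Real.log_pow]
    rw [hW, ← hl2def, ← hl3def]
    field_simp
  refine ⟨(2:ℝ) ^ m, (2:ℝ) ^ m, (3:ℝ) ^ m, (3:ℝ) ^ m,
    one_lt_pow₀ (by norm_num) (by omega), one_lt_pow₀ (by norm_num) (by omega),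
    one_lt_pow₀ (by norm_num) (by omega), one_lt_pow₀ (by norm_num) (by omega), ?_⟩
  rw [hFaa 2 (by norm_num), hFaa 3 (by norm_num), hFu, hFXX W hW1]
  -- LHS = F14 n 2 3 = weighted mean of 2^e and 3^e; RHS = W^e; Jensen strict
  have hL : F14 n 2 3 =
      (l3 / (l2 + l3)) * (2:ℝ) ^ (((n : ℝ) - 1)⁻¹)
        + (l2 / (l2 + l3)) * (3:ℝ) ^ (((n : ℝ) - 1)⁻¹) := by
    rw [F14, Real.log_mul (by norm_num) (by norm_num), ← hl2def, ← hl3def]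
    field_simp
  have hθ : 0 < l3 / (l2 + l3) := by positivity
  have hb : 0 < l2 / (l2 + l3) := by positivity
  have hsum : l3 / (l2 + l3) + l2 / (l2 + l3) = 1 := by
    field_simp
    ring
  have jensen := (Real.strictConcaveOn_rpow he_pos he_lt).2
    (Set.mem_Ici.mpr (by norm_num : (0:ℝ) ≤ 2))
    (Set.mem_Ici.mpr (by norm_num : (0:ℝ) ≤ 3))
    (by norm_num : (2:ℝ) ≠ 3) hθ hb hsum
  simp only [smul_eq_mul] at jensen
  have hWeq : (l3 / (l2 + l3)) * 2 + (l2 / (l2 + l3)) * 3 = W := by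
    rw [hW]; field_simp
  rw [hWeq] at jensen
  rw [hL]
  exact ne_of_lt jensen

/-- For each `n ≥ 2`, the function `F` is not bisymmetric on `(1,∞)`. -/
theorem F14_not_bisymmetric (n : ℕ) (hn : 2 ≤ n) :
    ∃ x y s t : ℝ, 1 < x ∧ 1 < y ∧ 1 < s ∧ 1 < t ∧
      F14 n (F14 n x y) (F14 n s t) ≠ F14 n (F14 n x s) (F14 n y t) := by
  rcases eq_or_lt_of_le hn with h | h
  · exact h ▸ case_two
  · exact case_ge_three n h
end

section
/- For each n ≥ 2, the multiplicative Cauchy quotient mean 𝓟_n is not a quasi arithmetic mean: there is no continuous, strictly monotone function φ : (1,∞) → ℝ such that 𝓟_n(x_1,…,x_n) = φ⁻¹( (1/n) Σ_{i=1}^n φ(x_i) ) for all x_1,…,x_n > 1. -/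
open Real Set

noncomputable def wv (m : ℕ) (a b : ℝ) : Fin (m+2) → ℝ :=
  fun i => if (i : ℕ) = 0 then a else if (i : ℕ) = 1 then b else Real.exp 1

lemma wv_apply_sum (m : ℕ) (a b : ℝ) (f : ℝ → ℝ) :
    ∑ i, f (wv m a b i) = f a + f b + m * f (Real.exp 1) := by
  rw [Fin.sum_univ_succ, Fin.sum_univ_succ]
  simp only [wv]
  norm_num [Fin.val_succ]
  ring

lemma wv_apply_prod (m : ℕ) (a b : ℝ) (f : ℝ → ℝ) :
    ∏ i, f (wv m a b i) = f a * f b * f (Real.exp 1) ^ m := by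
  rw [Fin.prod_univ_succ, Fin.prod_univ_succ]
  simp only [wv]
  norm_num [Fin.val_succ]
  ring

/-- exponent function in additive coordinates -/
noncomputable def gf (m : ℕ) (p q : ℝ) : ℝ :=
  (p * Real.log ((p + q + m) / p) + q * Real.log ((p + q + m) / q)
    + m * Real.log (p + q + m)) / ((m + 2 : ℝ) * Real.log (m + 2))

lemma wv_formula (m : ℕ) {p q : ℝ} (hp : 0 < p) (hq : 0 < q) :
    multCauchyQuotientMean (m + 2) (wv m (Real.exp p) (Real.exp q))
      = Real.exp (gf m p q) := by
  have hS : 0 < p + q + m := by positivity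
  have hprod : ∏ j, wv m (Real.exp p) (Real.exp q) j = Real.exp (p + q + m) := by
    have := wv_apply_prod m (Real.exp p) (Real.exp q) id
    simp only [id] at this
    rw [this, ← Real.exp_nat_mul, ← Real.exp_add, ← Real.exp_add]
    norm_num [mul_comm]
  unfold multCauchyQuotientMean
  rw [hprod, Real.log_exp]
  have hmain : ∏ i, (wv m (Real.exp p) (Real.exp q) i)
        ^ (Real.log ((p + q + m) / Real.log (wv m (Real.exp p) (Real.exp q) i)))
      = Real.exp (p * Real.log ((p + q + m) / p) + q * Real.log ((p + q + m) / q)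
          + m * Real.log (p + q + m)) := by
    have := wv_apply_prod m (Real.exp p) (Real.exp q)
      (fun z => z ^ (Real.log ((p + q + m) / Real.log z)))
    rw [this, Real.rpow_def_of_pos (Real.exp_pos _), Real.rpow_def_of_pos (Real.exp_pos _),
      Real.rpow_def_of_pos (Real.exp_pos _), Real.log_exp, Real.log_exp, Real.log_exp,
      ← Real.exp_nat_mul, ← Real.exp_add, ← Real.exp_add]
    norm_num
  rw [hmain, Real.rpow_def_of_pos (Real.exp_pos _), Real.log_exp, gf]
  push_cast
  congr 1

private lemma key_lemma (n : ℕ) (hn : 2 ≤ n) (φ : ℝ → ℝ)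
    (hc : ContinuousOn φ (Set.Ioi 1))
    (hm : StrictMonoOn φ (Set.Ioi 1) ∨ StrictAntiOn φ (Set.Ioi 1))
    (he : ∀ x : Fin n → ℝ, (∀ i, 1 < x i) → multCauchyQuotientMean n x =
      Function.invFunOn φ (Set.Ioi 1) ((∑ i, φ (x i)) / n))
    (x : Fin n → ℝ) (hx : ∀ i, 1 < x i) :
    multCauchyQuotientMean n x ∈ Set.Ioi (1:ℝ) ∧
      φ (multCauchyQuotientMean n x) = (∑ i, φ (x i)) / n := by
  have hnR : 0 < (n:ℝ) := by
    have : 0 < n := by omega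
    exact_mod_cast this
  have hne : (Finset.univ : Finset (Fin n)).Nonempty := ⟨⟨0, by omega⟩, Finset.mem_univ _⟩
  set v := (∑ i, φ (x i)) / (n:ℝ) with hv
  obtain ⟨imin, -, hmin⟩ := Finset.exists_min_image Finset.univ x hne
  obtain ⟨imax, -, hmax⟩ := Finset.exists_max_image Finset.univ x hne
  have hxmem : ∀ i, x i ∈ Set.Ioi (1:ℝ) := fun i => hx i
  have hsub : Set.uIcc (x imin) (x imax) ⊆ Set.Ioi (1:ℝ) :=
    Set.ordConnected_Ioi.uIcc_subset (hxmem imin) (hxmem imax)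
  have hbound : ∀ i, min (φ (x imin)) (φ (x imax)) ≤ φ (x i) ∧
      φ (x i) ≤ max (φ (x imin)) (φ (x imax)) := by
    intro i
    rcases hm with h | h
    · have h1 := h.monotoneOn (hxmem imin) (hxmem i) (hmin i (Finset.mem_univ i))
      have h2 := h.monotoneOn (hxmem i) (hxmem imax) (hmax i (Finset.mem_univ i))
      exact ⟨le_trans (min_le_left _ _) h1, le_trans h2 (le_max_right _ _)⟩
    · have h1 := h.antitoneOn (hxmem i) (hxmem imax) (hmax i (Finset.mem_univ i))
      have h2 := h.antitoneOn (hxmem imin) (hxmem i) (hmin i (Finset.mem_univ i))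
      exact ⟨le_trans (min_le_right _ _) h1, le_trans h2 (le_max_left _ _)⟩
  have hvlo : min (φ (x imin)) (φ (x imax)) ≤ v := by
    have h1 : ∑ _i : Fin n, min (φ (x imin)) (φ (x imax)) ≤ ∑ i, φ (x i) :=
      Finset.sum_le_sum (fun i _ => (hbound i).1)
    rw [Finset.sum_const, Finset.card_univ, Fintype.card_fin, nsmul_eq_mul] at h1
    rw [hv, le_div_iff₀ hnR]
    linarith
  have hvhi : v ≤ max (φ (x imin)) (φ (x imax)) := by
    have h1 : ∑ i, φ (x i) ≤ ∑ _i : Fin n, max (φ (x imin)) (φ (x imax)) :=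
      Finset.sum_le_sum (fun i _ => (hbound i).2)
    rw [Finset.sum_const, Finset.card_univ, Fintype.card_fin, nsmul_eq_mul] at h1
    rw [hv, div_le_iff₀ hnR]
    linarith
  have hv_uIcc : v ∈ Set.uIcc (φ (x imin)) (φ (x imax)) := by
    rcases le_total (φ (x imin)) (φ (x imax)) with h | h
    · exact Set.mem_uIcc.mpr (Or.inl ⟨by simpa [min_eq_left h] using hvlo,
        by simpa [max_eq_right h] using hvhi⟩)
    · exact Set.mem_uIcc.mpr (Or.inr ⟨by simpa [min_eq_right h] using hvlo,
        by simpa [max_eq_left h] using hvhi⟩)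
  obtain ⟨z, hz, hzv⟩ := intermediate_value_uIcc (hc.mono hsub) hv_uIcc
  have hex : ∃ a ∈ Set.Ioi (1:ℝ), φ a = v := ⟨z, hsub hz, hzv⟩
  refine ⟨?_, ?_⟩
  · rw [he x hx]; exact Function.invFunOn_mem hex
  · rw [he x hx]; exact Function.invFunOn_eq hex

noncomputable def Kc (m : ℕ) : ℝ := ((m:ℝ) + 2) * Real.log ((m:ℝ) + 2)

lemma hm0 (m : ℕ) : (0:ℝ) ≤ (m:ℝ) := Nat.cast_nonneg m

lemma Kc_pos (m : ℕ) : 0 < Kc m := by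
  have := hm0 m
  exact mul_pos (by linarith) (Real.log_pos (by linarith))

lemma K_gf (m : ℕ) (p q : ℝ) :
    Kc m * gf m p q = p * Real.log ((p + q + m) / p) + q * Real.log ((p + q + m) / q)
      + m * Real.log (p + q + m) := by
  rw [gf, Kc, mul_comm, div_mul_cancel₀]
  exact ne_of_gt (Kc_pos m)

lemma L_low1 (m : ℕ) {T : ℝ} (hT : 1 ≤ T) :
    ((m:ℝ) + 1) * Real.log T ≤ Kc m * gf m T 1 := by
  have hμ := hm0 m
  have hT0 : (0:ℝ) < T := by linarith
  rw [K_gf]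
  have h1 : 0 ≤ T * Real.log ((T + 1 + m) / T) := by
    apply mul_nonneg (le_of_lt hT0)
    apply Real.log_nonneg
    rw [le_div_iff₀ hT0]; linarith
  have h2 : Real.log T ≤ Real.log (T + 1 + m) := by
    apply Real.log_le_log hT0; linarith
  have h3 : Real.log ((T + 1 + m) / 1) = Real.log (T + 1 + m) := by rw [div_one]
  nlinarith [Real.log_nonneg (show (1:ℝ) ≤ T from hT)]

lemma L_pos2 (m : ℕ) {T : ℝ} (hT : 1 ≤ T) : 0 < Kc m * gf m T 2 := by
  have hμ := hm0 m
  have hT0 : (0:ℝ) < T := by linarith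
  rw [K_gf]
  have h1 : 0 ≤ T * Real.log ((T + 2 + m) / T) := by
    apply mul_nonneg (le_of_lt hT0)
    apply Real.log_nonneg
    rw [le_div_iff₀ hT0]; linarith
  have h2 : 0 < Real.log ((T + 2 + m) / 2) := by
    apply Real.log_pos
    rw [lt_div_iff₀ (by norm_num : (0:ℝ) < 2)]; linarith
  have h3 : 0 ≤ Real.log (T + 2 + m) := Real.log_nonneg (by linarith)
  nlinarith

lemma L_up2 (m : ℕ) {T : ℝ} (hT : 1 ≤ T) :
    Kc m * gf m T 2 ≤ ((m:ℝ) + 2) * Real.log T + ((m:ℝ) + 2) * (1 + Real.log ((m:ℝ) + 3)) := by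
  have hμ := hm0 m
  have hT0 : (0:ℝ) < T := by linarith
  rw [K_gf]
  have h1 : T * Real.log ((T + 2 + m) / T) ≤ 2 + m := by
    have := Real.log_le_sub_one_of_pos (show (0:ℝ) < (T + 2 + m) / T by positivity)
    have h' : (T + 2 + m) / T - 1 = (2 + m) / T := by field_simp; ring
    rw [h'] at this
    calc T * Real.log ((T + 2 + m) / T) ≤ T * ((2 + m) / T) := by
          apply mul_le_mul_of_nonneg_left this (le_of_lt hT0)
      _ = 2 + m := by field_simp
  have h2 : Real.log ((T + 2 + m) / 2) ≤ Real.log (T + 2 + m) := by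
    apply Real.log_le_log (by positivity)
    rw [div_le_iff₀ (by norm_num : (0:ℝ) < 2)]; nlinarith
  have h3 : Real.log (T + 2 + m) ≤ Real.log T + Real.log ((m:ℝ) + 3) := by
    rw [← Real.log_mul (ne_of_gt hT0) (by linarith)]
    apply Real.log_le_log (by linarith)
    nlinarith
  nlinarith

lemma L_low3 (m : ℕ) {s d : ℝ} (hs : 1 ≤ s) (hd : 0 < d) :
    (d + m) * Real.log s - d * Real.log d ≤ Kc m * gf m s d := by
  have hμ := hm0 m
  have hs0 : (0:ℝ) < s := by linarith
  rw [K_gf]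
  have h1 : 0 ≤ s * Real.log ((s + d + m) / s) := by
    apply mul_nonneg (le_of_lt hs0)
    apply Real.log_nonneg
    rw [le_div_iff₀ hs0]; linarith
  have h2 : Real.log ((s + d + m) / d) = Real.log (s + d + m) - Real.log d :=
    Real.log_div (by positivity) (ne_of_gt hd)
  have h3 : Real.log s ≤ Real.log (s + d + m) := by
    apply Real.log_le_log hs0; linarith
  nlinarith

lemma L_up4 (m : ℕ) {s : ℝ} (hs : 0 < s) :
    Kc m * gf m s 1 ≤ ((m:ℝ) + 1) + ((m:ℝ) + 1) * Real.log (s + 1 + m) := by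
  have hμ := hm0 m
  rw [K_gf]
  have h1 : s * Real.log ((s + 1 + m) / s) ≤ 1 + m := by
    have := Real.log_le_sub_one_of_pos (show (0:ℝ) < (s + 1 + m) / s by positivity)
    have h' : (s + 1 + m) / s - 1 = (1 + m) / s := by field_simp; ring
    rw [h'] at this
    calc s * Real.log ((s + 1 + m) / s) ≤ s * ((1 + m) / s) := by
          apply mul_le_mul_of_nonneg_left this (le_of_lt hs)
      _ = 1 + m := by field_simp
  have h3 : Real.log ((s + 1 + m) / 1) = Real.log (s + 1 + m) := by rw [div_one]
  nlinarith

lemma delta_gt_one (m : ℕ) : 1 < gf m 2 1 := by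
  have hμ := hm0 m
  have hK := Kc_pos m
  rw [Kc] at hK
  rw [gf, one_lt_div hK]
  have e1 : (2:ℝ) + 1 + m = (m:ℝ) + 3 := by ring
  have h1 : Real.log ((m:ℝ) + 2) ≤ 2 * Real.log (((m:ℝ) + 3) / 2) := by
    have hp : Real.log ((((m:ℝ) + 3) / 2) ^ (2:ℕ)) = 2 * Real.log (((m:ℝ) + 3) / 2) := by
      rw [Real.log_pow]; norm_num
    rw [← hp]
    apply Real.log_le_log (by linarith)
    rw [div_pow, le_div_iff₀ (by norm_num : (0:ℝ) < 2 ^ 2)]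
    nlinarith
  have h2 : Real.log ((m:ℝ) + 2) < Real.log ((m:ℝ) + 3) := by
    apply Real.log_lt_log (by linarith); linarith
  have h3 : Real.log (((m:ℝ) + 3) / 1) = Real.log ((m:ℝ) + 3) := by rw [div_one]
  rw [e1, h3]
  nlinarith

lemma assemble (μ K C₁ δ : ℝ) (hμ : 0 ≤ μ) (hK : 0 < K) (hC₁ : 0 ≤ C₁) (hδ : 1 < δ) :
    ∃ E : ℝ, 1 ≤ E ∧ K ≤ (μ + 1) * E ∧
      ∀ s₁ s₂ A B : ℝ, 0 < s₁ → 1 ≤ s₂ →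
        (μ + 1) * E ≤ K * s₂ → K * s₁ ≤ (μ + 2) * E + C₁ →
        (δ + μ) * Real.log s₂ - δ * Real.log δ ≤ K * A →
        K * B ≤ (μ + 1) + (μ + 1) * Real.log (s₁ + 1 + μ) →
        B < A := by
  have hδ0 : 0 < δ := by linarith
  set C₄ : ℝ := (μ + 2 + C₁ + K * (μ + 1)) / (μ + 1) with hC₄def
  have hC₄ : 0 < C₄ := by
    apply div_pos _ (by linarith)
    nlinarith
  set C₅ : ℝ := δ * Real.log δ + (μ + 1) * (1 + Real.log C₄) with hC₅def
  set Z : ℝ := max (max 1 (K / (μ + 1))) (C₅ / (δ - 1) + 1 - Real.log ((μ + 1) / K)) with hZdef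
  have hZ1 : (1:ℝ) ≤ Z := le_trans (le_max_left _ _) (le_max_left _ _)
  have hZK : K / (μ + 1) ≤ Z := le_trans (le_max_right _ _) (le_max_left _ _)
  have hZbig : C₅ / (δ - 1) + 1 - Real.log ((μ + 1) / K) ≤ Z := le_max_right _ _
  have hEZ1 : (1:ℝ) ≤ Real.exp Z := Real.one_le_exp (by linarith)
  refine ⟨Real.exp Z, hEZ1, ?_, ?_⟩
  · have h1 : K / (μ + 1) ≤ Real.exp Z := by linarith [Real.add_one_le_exp Z]
    rw [div_le_iff₀ (by linarith : (0:ℝ) < μ + 1)] at h1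
    linarith
  intro s₁ s₂ A B h_s1_pos h_s2_1 h_s2K h_s1K hlowA hupB
  have h_s2_pos : (0:ℝ) < s₂ := by linarith
  have h_ratio : s₁ + 1 + μ ≤ C₄ * s₂ := by
    have h0 : 0 ≤ K * (1 + μ) := by positivity
    have h0' := mul_nonneg h0 (by linarith : (0:ℝ) ≤ Real.exp Z - 1)
    have h1 : K * (s₁ + 1 + μ) ≤ (μ + 2 + C₁ + K * (μ + 1)) * Real.exp Z := by nlinarith
    have h2 : (μ + 2 + C₁ + K * (μ + 1)) * Real.exp Z = C₄ * ((μ + 1) * Real.exp Z) := by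
      rw [hC₄def]; field_simp
    have h3 : C₄ * ((μ + 1) * Real.exp Z) ≤ C₄ * (K * s₂) :=
      mul_le_mul_of_nonneg_left h_s2K (le_of_lt hC₄)
    have h4 : K * (s₁ + 1 + μ) ≤ K * (C₄ * s₂) := by
      calc K * (s₁ + 1 + μ) ≤ C₄ * (K * s₂) := by linarith
        _ = K * (C₄ * s₂) := by ring
    exact le_of_mul_le_mul_left h4 hK
  have h_log_ratio : Real.log (s₁ + 1 + μ) ≤ Real.log C₄ + Real.log s₂ := by
    rw [← Real.log_mul (ne_of_gt hC₄) (ne_of_gt h_s2_pos)]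
    exact Real.log_le_log (by linarith) h_ratio
  have hup : K * B ≤ (μ + 1) + (μ + 1) * (Real.log C₄ + Real.log s₂) := by
    have h2 : (μ + 1) * Real.log (s₁ + 1 + μ) ≤ (μ + 1) * (Real.log C₄ + Real.log s₂) :=
      mul_le_mul_of_nonneg_left h_log_ratio (by linarith)
    linarith
  have h_logs2 : Real.log ((μ + 1) / K) + Z ≤ Real.log s₂ := by
    have h1 : (μ + 1) / K * Real.exp Z ≤ s₂ := by
      rw [div_mul_eq_mul_div, div_le_iff₀ hK]
      linarith
    have h2 : Real.log ((μ + 1) / K * Real.exp Z) ≤ Real.log s₂ :=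
      Real.log_le_log (by positivity) h1
    rw [Real.log_mul (by positivity) (ne_of_gt (Real.exp_pos Z)), Real.log_exp] at h2
    linarith
  have hmul : (δ - 1) * (C₅ / (δ - 1) + 1) ≤ (δ - 1) * Real.log s₂ :=
    mul_le_mul_of_nonneg_left (by linarith) (by linarith : (0:ℝ) ≤ δ - 1)
  have hcancel : (δ - 1) * (C₅ / (δ - 1) + 1) = C₅ + (δ - 1) := by
    have hne : δ - 1 ≠ 0 := by linarith
    field_simp
  have hring : (δ + μ) * Real.log s₂ - (μ + 1) * Real.log s₂ = (δ - 1) * Real.log s₂ := by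
    ring
  have hfinal : K * B < K * A := by nlinarith
  have := lt_of_mul_lt_mul_left hfinal (le_of_lt hK)
  linarith

lemma exists_bad (m : ℕ) : ∃ T : ℝ, 0 < T ∧
    gf m (gf m T 2) 1 ≠ gf m (gf m T 1) (gf m 2 1) := by
  have hμ := hm0 m
  have hK := Kc_pos m
  have hδ : 1 < gf m 2 1 := delta_gt_one m
  obtain ⟨E, hE1, hEK, hmain⟩ := assemble (m:ℝ) (Kc m)
    (((m:ℝ) + 2) * (1 + Real.log ((m:ℝ) + 3))) (gf m 2 1) hμ hK
    (by have : 0 ≤ Real.log ((m:ℝ) + 3) := Real.log_nonneg (by linarith); positivity) hδ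
  set T : ℝ := Real.exp E with hTdef
  have hT1 : (1:ℝ) ≤ T := Real.one_le_exp (by linarith)
  have hT0 : (0:ℝ) < T := by linarith
  have hlogT : Real.log T = E := Real.log_exp _
  have h_s2K : ((m:ℝ) + 1) * E ≤ Kc m * gf m T 1 := by
    have := L_low1 m hT1; rw [hlogT] at this; linarith
  have h_s2_1 : 1 ≤ gf m T 1 := by
    have h2 : Kc m * 1 ≤ Kc m * gf m T 1 := by linarith
    exact le_of_mul_le_mul_left h2 hK
  have h_s1_pos : 0 < gf m T 2 := by
    have h : 0 < Kc m * gf m T 2 := L_pos2 m hT1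
    have heq : gf m T 2 = Kc m * gf m T 2 / Kc m := by field_simp
    rw [heq]; exact div_pos h hK
  have h_s1K : Kc m * gf m T 2 ≤ ((m:ℝ) + 2) * E + ((m:ℝ) + 2) * (1 + Real.log ((m:ℝ) + 3)) := by
    have := L_up2 m hT1; rw [hlogT] at this; linarith
  have hlow := L_low3 m h_s2_1 (by linarith : (0:ℝ) < gf m 2 1)
  have hup := L_up4 m h_s1_pos
  have hBA := hmain (gf m T 2) (gf m T 1) (gf m (gf m T 1) (gf m 2 1)) (gf m (gf m T 2) 1)
    h_s1_pos h_s2_1 h_s2K h_s1K (by linarith [hlow]) (by linarith [hup])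
  exact ⟨T, hT0, ne_of_lt hBA⟩

/-- For each `n ≥ 2`, the multiplicative Cauchy quotient mean `𝓟ₙ` is not a quasi
arithmetic mean on `(1,∞)`. -/
theorem multCauchyQuotientMean_not_quasiArithmetic (n : ℕ) (hn : 2 ≤ n) :
    ¬ ∃ φ : ℝ → ℝ, ContinuousOn φ (Set.Ioi (1 : ℝ)) ∧
      (StrictMonoOn φ (Set.Ioi (1 : ℝ)) ∨ StrictAntiOn φ (Set.Ioi (1 : ℝ))) ∧
      ∀ x : Fin n → ℝ, (∀ i, 1 < x i) →
        multCauchyQuotientMean n x =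
          Function.invFunOn φ (Set.Ioi (1 : ℝ)) ((∑ i, φ (x i)) / n) := by
  rintro ⟨φ, hc, hm, he⟩
  obtain ⟨m, rfl⟩ : ∃ m, n = m + 2 := ⟨n - 2, by omega⟩
  have hn2 : 2 ≤ m + 2 := by omega
  have key := key_lemma (m + 2) hn2 φ hc hm he
  have hinj : Set.InjOn φ (Set.Ioi 1) := hm.elim StrictMonoOn.injOn StrictAntiOn.injOn
  have hwv : ∀ a b : ℝ, 1 < a → 1 < b → ∀ i, 1 < wv m a b i := by
    intro a b ha hb i
    unfold wv
    split_ifs with h1 h2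
    · exact ha
    · exact hb
    · exact Real.one_lt_exp_iff.mpr one_pos
  have hNR : ((m + 2 : ℕ) : ℝ) ≠ 0 := by positivity
  -- main computation : for every p q > 0, the mean of wv m (exp p) (exp q) is exp (gf m p q),
  -- it lies in Ioi 1, and its φ-value is the average
  have step : ∀ p q : ℝ, 0 < p → 0 < q →
      Real.exp (gf m p q) ∈ Set.Ioi (1:ℝ) ∧
      φ (Real.exp (gf m p q)) =
        (φ (Real.exp p) + φ (Real.exp q) + m * φ (Real.exp 1)) / ((m + 2 : ℕ) : ℝ) := by
    intro p q hp hq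
    have h1 : ∀ i, 1 < wv m (Real.exp p) (Real.exp q) i :=
      hwv _ _ (Real.one_lt_exp_iff.mpr hp) (Real.one_lt_exp_iff.mpr hq)
    obtain ⟨hmem, hval⟩ := key (wv m (Real.exp p) (Real.exp q)) h1
    rw [wv_formula m hp hq] at hmem hval
    rw [wv_apply_sum m _ _ φ] at hval
    exact ⟨hmem, hval⟩
  -- the quasi-arithmetic identity forces this equality for all T > 0
  have idC : ∀ T : ℝ, 0 < T → gf m (gf m T 2) 1 = gf m (gf m T 1) (gf m 2 1) := by
    intro T hT
    obtain ⟨hA_mem, hA_val⟩ := step T 2 hT two_pos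
    obtain ⟨hB_mem, hB_val⟩ := step T 1 hT one_pos
    obtain ⟨hD_mem, hD_val⟩ := step 2 1 two_pos one_pos
    have hA_pos : 0 < gf m T 2 := Real.one_lt_exp_iff.mp hA_mem
    have hB_pos : 0 < gf m T 1 := Real.one_lt_exp_iff.mp hB_mem
    have hD_pos : 0 < gf m 2 1 := Real.one_lt_exp_iff.mp hD_mem
    obtain ⟨hL_mem, hL_val⟩ := step (gf m T 2) 1 hA_pos one_pos
    obtain ⟨hR_mem, hR_val⟩ := step (gf m T 1) (gf m 2 1) hB_pos hD_pos
    have hφeq : φ (Real.exp (gf m (gf m T 2) 1)) = φ (Real.exp (gf m (gf m T 1) (gf m 2 1))) := by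
      rw [hL_val, hR_val, hA_val, hB_val, hD_val]
      field_simp
      push_cast
      ring
    have := hinj hL_mem hR_mem hφeq
    exact Real.exp_injective this
  obtain ⟨T, hT0, hne⟩ := exists_bad m
  exact hne (idC T hT0)
end

section
/- Let (ξ_n) be a sequence of independent identically distributed random variables such that P(ξ_1 > 1) = 1 and E(ξ_1) < ∞. Then ( Σ_{i=1}^n ξ_i^{−1/(n−1)} ln(ξ_i) ) / ( Σ_{i=1}^n ln(ξ_i) ) → 1 almost surely as n → ∞; moreover, for each n ≥ 2, almost surely ( (ξ_1 + ⋯ + ξ_n)/n )^{−1/(n−1)} n^{−1/(n−1)} ≤ ( Σ_{i=1}^n ξ_i^{−1/(n−1)} ln(ξ_i) ) / ( Σ_{i=1}^n ln(ξ_i) ) ≤ 1. -/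
open MeasureTheory ProbabilityTheory Filter Topology


lemma aux_sandwich (n : ℕ) (hn : 2 ≤ n) (x : ℕ → ℝ) (hx : ∀ i, 1 < x i) :
    ((∑ i ∈ Finset.range n, x i) / n) ^ (-(((n:ℝ)-1)⁻¹)) * (n:ℝ) ^ (-(((n:ℝ)-1)⁻¹))
      ≤ (∑ i ∈ Finset.range n, x i ^ (-(((n:ℝ)-1)⁻¹)) * Real.log (x i)) /
        (∑ i ∈ Finset.range n, Real.log (x i)) ∧
    (∑ i ∈ Finset.range n, x i ^ (-(((n:ℝ)-1)⁻¹)) * Real.log (x i)) /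
        (∑ i ∈ Finset.range n, Real.log (x i)) ≤ 1 ∧
    ((∑ i ∈ Finset.range n, x i) / n) ^ (-(((n:ℝ)-1)⁻¹)) * (n:ℝ) ^ (-(((n:ℝ)-1)⁻¹))
      = (∑ i ∈ Finset.range n, x i) ^ (-(((n:ℝ)-1)⁻¹)) := by
  have hn0 : (0:ℝ) < n := by positivity
  have hc : (0:ℝ) ≤ ((n:ℝ)-1)⁻¹ := by
    have : (1:ℝ) ≤ (n:ℝ) - 1 := by
      have : (2:ℝ) ≤ n := by exact_mod_cast hn
      linarith
    positivity
  set c : ℝ := ((n:ℝ)-1)⁻¹ with hcdef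
  set S : ℝ := ∑ i ∈ Finset.range n, x i with hS
  have hSpos : 0 < S := by
    refine Finset.sum_pos (fun i _ => lt_trans one_pos (hx i)) ?_
    exact Finset.nonempty_range_iff.mpr (by omega)
  have hL : 0 < ∑ i ∈ Finset.range n, Real.log (x i) := by
    refine Finset.sum_pos (fun i _ => Real.log_pos (hx i)) ?_
    exact Finset.nonempty_range_iff.mpr (by omega)
  have heq : (S / n) ^ (-c) * (n:ℝ) ^ (-c) = S ^ (-c) := by
    rw [← Real.mul_rpow (by positivity) (by positivity)]
    rw [div_mul_cancel₀ _ (ne_of_gt hn0)]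
  refine ⟨?_, ?_, heq⟩
  · rw [heq, le_div_iff₀ hL, Finset.mul_sum]
    refine Finset.sum_le_sum fun i hi => ?_
    refine mul_le_mul_of_nonneg_right ?_ (Real.log_nonneg (hx i).le)
    refine Real.rpow_le_rpow_of_nonpos (lt_trans one_pos (hx i)) ?_ (by simpa using hc)
    exact Finset.single_le_sum (fun j _ => (lt_trans one_pos (hx j)).le) hi
  · rw [div_le_one hL]
    refine Finset.sum_le_sum fun i _ => ?_
    calc x i ^ (-c) * Real.log (x i) ≤ 1 * Real.log (x i) := by
          refine mul_le_mul_of_nonneg_right ?_ (Real.log_nonneg (hx i).le)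
          exact Real.rpow_le_one_of_one_le_of_nonpos (hx i).le (by simpa using hc)
      _ = Real.log (x i) := one_mul _

lemma aux_tendsto (x : ℕ → ℝ) (hx : ∀ i, 1 < x i) (m : ℝ)
    (hT : Tendsto (fun n : ℕ => (∑ i ∈ Finset.range n, x i)/n) atTop (𝓝 m)) :
    Tendsto (fun n : ℕ => (∑ i ∈ Finset.range n, x i ^ (-(((n:ℝ)-1)⁻¹)) * Real.log (x i)) /
      (∑ i ∈ Finset.range n, Real.log (x i))) atTop (𝓝 1) := by
  have hSn : ∀ n : ℕ, (n:ℝ) ≤ ∑ i ∈ Finset.range n, x i := by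
    intro n
    calc (n:ℝ) = ∑ _i ∈ Finset.range n, (1:ℝ) := by simp
      _ ≤ _ := Finset.sum_le_sum fun i _ => (hx i).le
  have hm : (1:ℝ) ≤ m := by
    refine ge_of_tendsto hT ?_
    filter_upwards [eventually_ge_atTop 1] with n hn
    rw [le_div_iff₀ (by positivity)]
    simpa using hSn n
  have hm0 : (0:ℝ) < m := lt_of_lt_of_le one_pos hm
  have h1 : Tendsto (fun n : ℕ => Real.log ((∑ i ∈ Finset.range n, x i)/n) / n)
      atTop (𝓝 0) :=
    Tendsto.div_atTop ((Real.continuousAt_log hm0.ne').tendsto.comp hT)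
      tendsto_natCast_atTop_atTop
  have h2 : Tendsto (fun n : ℕ => Real.log n / n) atTop (𝓝 0) := by
    have := (Real.isLittleO_log_id_atTop.tendsto_div_nhds_zero).comp
      (tendsto_natCast_atTop_atTop (R := ℝ))
    simpa [Function.comp_def] using this
  have h3 : Tendsto (fun n : ℕ => (n:ℝ)/((n:ℝ)-1)) atTop (𝓝 1) := by
    have h3' : Tendsto (fun n : ℕ => 1 + ((n:ℝ)-1)⁻¹) atTop (𝓝 (1+0)) := by
      refine tendsto_const_nhds.add ?_
      have := tendsto_inv_atTop_zero.comp
        (tendsto_atTop_add_const_right atTop (-1 : ℝ) (tendsto_natCast_atTop_atTop (R := ℝ)))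
      simpa [Function.comp_def, sub_eq_add_neg] using this
    rw [show (1:ℝ) = 1 + 0 by ring]
    refine h3'.congr' ?_
    filter_upwards [eventually_ge_atTop 2] with n hn
    have hn1 : ((n:ℝ)-1) ≠ 0 := by
      have : (2:ℝ) ≤ n := by exact_mod_cast hn
      intro h; linarith [h]
    simp only [add_zero]
    field_simp
    ring
  have hW : Tendsto (fun n : ℕ =>
      (Real.log ((∑ i ∈ Finset.range n, x i)/n) / n + Real.log n / n) * ((n:ℝ)/((n:ℝ)-1)))
      atTop (𝓝 0) := by
    have := (h1.add h2).mul h3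
    simpa using this
  have hG : Tendsto (fun n : ℕ => Real.exp (-(
      (Real.log ((∑ i ∈ Finset.range n, x i)/n) / n + Real.log n / n) * ((n:ℝ)/((n:ℝ)-1)))))
      atTop (𝓝 1) := by
    have := (Real.continuous_exp.tendsto (-0)).comp hW.neg
    simpa [Function.comp_def] using this
  refine tendsto_of_tendsto_of_tendsto_of_le_of_le' hG tendsto_const_nhds ?_ ?_
  · filter_upwards [eventually_ge_atTop 2] with n hn
    have hn0 : (0:ℝ) < n := by positivity
    have hn1 : (0:ℝ) < (n:ℝ)-1 := by
      have : (2:ℝ) ≤ n := by exact_mod_cast hn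
      linarith
    set S : ℝ := ∑ i ∈ Finset.range n, x i with hS
    have hSpos : 0 < S := lt_of_lt_of_le hn0 (hSn n)
    have key : Real.exp (-((Real.log (S/n) / n + Real.log n / n) * ((n:ℝ)/((n:ℝ)-1))))
        = S ^ (-(((n:ℝ)-1)⁻¹)) := by
      rw [Real.rpow_def_of_pos hSpos]
      congr 1
      rw [Real.log_div hSpos.ne' hn0.ne']
      field_simp
      ring
    rw [key]
    have := (aux_sandwich n hn x hx).1
    have heq := (aux_sandwich n hn x hx).2.2
    rw [heq] at this
    exact this
  · filter_upwards [eventually_ge_atTop 2] with n hn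
    exact (aux_sandwich n hn x hx).2.1

/-- For i.i.d. random variables `ξᵢ > 1` with finite mean, the ratio
`(Σᵢ ξᵢ^{−1/(n−1)} ln ξᵢ)/(Σᵢ ln ξᵢ)` converges to `1` almost surely, and for every
`n ≥ 2` it is almost surely sandwiched between
`((ξ₁+⋯+ξₙ)/n)^{−1/(n−1)} n^{−1/(n−1)}` and `1`. -/
theorem logCauchyQuotient_ratio_tendsto_one
    {Ω : Type*} [MeasurableSpace Ω] (μ : Measure Ω) [IsProbabilityMeasure μ]
    (ξ : ℕ → Ω → ℝ) (hmeas : ∀ n, Measurable (ξ n))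
    (hindep : iIndepFun ξ μ)
    (hident : ∀ n, IdentDistrib (ξ n) (ξ 0) μ μ)
    (hgt : ∀ᵐ ω ∂μ, 1 < ξ 0 ω)
    (hint : Integrable (ξ 0) μ) :
    (∀ᵐ ω ∂μ, Tendsto
      (fun n : ℕ =>
        (∑ i ∈ Finset.range n, (ξ i ω) ^ (-(((n : ℝ) - 1)⁻¹)) * Real.log (ξ i ω)) /
          (∑ i ∈ Finset.range n, Real.log (ξ i ω)))
      atTop (𝓝 1)) ∧
    ∀ n : ℕ, 2 ≤ n → ∀ᵐ ω ∂μ,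
      ((∑ i ∈ Finset.range n, ξ i ω) / n) ^ (-(((n : ℝ) - 1)⁻¹)) *
          (n : ℝ) ^ (-(((n : ℝ) - 1)⁻¹)) ≤
        (∑ i ∈ Finset.range n, (ξ i ω) ^ (-(((n : ℝ) - 1)⁻¹)) * Real.log (ξ i ω)) /
          (∑ i ∈ Finset.range n, Real.log (ξ i ω)) ∧
      (∑ i ∈ Finset.range n, (ξ i ω) ^ (-(((n : ℝ) - 1)⁻¹)) * Real.log (ξ i ω)) /
          (∑ i ∈ Finset.range n, Real.log (ξ i ω)) ≤ 1 := by
  have hall : ∀ᵐ ω ∂μ, ∀ i, 1 < ξ i ω := by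
    rw [MeasureTheory.ae_all_iff]
    intro i
    exact (hident i).symm.ae_snd (p := fun y => 1 < y)
      (measurableSet_lt measurable_const measurable_id) hgt
  have hslln : ∀ᵐ ω ∂μ, Tendsto (fun n : ℕ => (∑ i ∈ Finset.range n, ξ i ω) / n)
      atTop (𝓝 (μ[ξ 0])) :=
    ProbabilityTheory.strong_law_ae_real ξ hint
      (fun i j hij => hindep.indepFun hij) hident
  constructor
  · filter_upwards [hall, hslln] with ω hω hT
    exact aux_tendsto (fun i => ξ i ω) hω _ hT
  · intro n hn
    filter_upwards [hall] with ω hω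
    exact ⟨(aux_sandwich n hn (fun i => ξ i ω) hω).1,
      (aux_sandwich n hn (fun i => ξ i ω) hω).2.1⟩
end
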